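/- arXiv:2501.01304 — 7 statements merged into one kernel-verified Lean document; each statement's English description precedes it below -/
import Mathlib

section
/- (Reverse Pinsker inequality.) Let μ and ν be probability measures on a measurable space (E, ℰ) with ν absolutely continuous with respect to μ, with density f := dν/dμ. Set Ent := ∫ f log f dμ (assumed finite), Varent := ∫ f (log f)² dμ − Ent² (assumed finite), and TV := sup_{A∈ℰ} |ν(A) − μ(A)|, and assume TV < 1. Then Ent ≤ (1 + √Varent) / (1 − TV). -/
open MeasureTheory

noncomputable section

variable {E : Type*} [MeasurableSpace E]

/-- Total variation distance between two measures: `sup_{A ∈ ℰ} |ν(A) − μ(A)|`. -/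
def tvDist (ν μ : Measure E) : ℝ :=
  ⨆ A : {A : Set E // MeasurableSet A}, |(ν A.1).toReal - (μ A.1).toReal|

lemma exists_pos_of_lintegral_pos {μ : Measure E} {g : E → ENNReal}
    (h : 0 < ∫⁻ a, g a ∂μ) :
    ∃ (c : ENNReal) (S : Set E), 0 < c ∧ MeasurableSet S ∧ 0 < μ S ∧ ∀ a ∈ S, c ≤ g a := by
  rw [lintegral_def] at h
  obtain ⟨φ, hφ⟩ := lt_iSup_iff.mp h
  obtain ⟨hle, hpos⟩ := lt_iSup_iff.mp hφ
  rw [SimpleFunc.lintegral] at hpos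
  obtain ⟨x, hxmem, hx⟩ : ∃ x ∈ φ.range, 0 < x * μ (φ ⁻¹' {x}) := by
    by_contra hc
    push_neg at hc
    have hz : ∑ x ∈ φ.range, x * μ (φ ⁻¹' {x}) = 0 :=
      Finset.sum_eq_zero fun x hx => le_antisymm (hc x hx) zero_le
    rw [hz] at hpos
    exact lt_irrefl _ hpos
  have hmul := ENNReal.mul_pos_iff.mp hx
  refine ⟨x, φ ⁻¹' {x}, hmul.1, φ.measurableSet_fiber x, hmul.2, fun a ha => ?_⟩
  have hφa : φ a = x := ha
  rw [← hφa]
  exact hle a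

lemma exists_good_density
    (μ ν : Measure E) [IsProbabilityMeasure μ] [IsProbabilityMeasure ν]
    (f : E → ℝ) (hf : ∀ a, 0 ≤ f a)
    (hdens : ν = μ.withDensity fun a => ENNReal.ofReal (f a))
    (hEnt : Integrable (fun a => f a * Real.log (f a)) μ)
    (hVarent : Integrable (fun a => f a * (Real.log (f a)) ^ 2) μ) :
    ∃ ρ : E → ℝ, Measurable ρ ∧ (∀ a, 0 ≤ ρ a) ∧
      (ν = μ.withDensity fun a => ENNReal.ofReal (ρ a)) ∧
      ((fun a => ρ a * Real.log (ρ a)) =ᵐ[μ] fun a => f a * Real.log (f a)) ∧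
      ((fun a => ρ a * (Real.log (ρ a)) ^ 2) =ᵐ[μ] fun a => f a * (Real.log (f a)) ^ 2) := by
  classical
  have hφsm := hEnt.1
  have hψsm := hVarent.1
  set φ' : E → ℝ := hφsm.mk _ with hφ'def
  have hφ'meas : Measurable φ' := hφsm.measurable_mk
  have hφae : (fun a => f a * Real.log (f a)) =ᵐ[μ] φ' := hφsm.ae_eq_mk
  set ψ' : E → ℝ := hψsm.mk _ with hψ'def
  have hψ'meas : Measurable ψ' := hψsm.measurable_mk
  have hψae : (fun a => f a * (Real.log (f a)) ^ 2) =ᵐ[μ] ψ' := hψsm.ae_eq_mk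
  set Z : Set E := {a | φ' a = 0} with hZdef
  have hZ : MeasurableSet Z := hφ'meas (measurableSet_singleton 0)
  -- absolute continuity
  have hac : ν ≪ μ := by
    intro s hs0
    obtain ⟨t, hst, htm, ht0⟩ := exists_measurable_superset_of_null hs0
    refine measure_mono_null hst ?_
    rw [hdens, withDensity_apply _ htm, Measure.restrict_eq_zero.mpr ht0,
      lintegral_zero_measure]
  set F : E → ENNReal := ν.rnDeriv μ with hFdef
  have hFmeas : Measurable F := Measure.measurable_rnDeriv ν μ
  have hνF : μ.withDensity F = ν := Measure.withDensity_rnDeriv_eq ν μ hac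
  have hFlt : ∀ᵐ a ∂μ, F a < ⊤ := Measure.rnDeriv_lt_top ν μ
  set ρ : E → ℝ := fun a => (F a).toReal with hρdef
  have hρmeas : Measurable ρ := hFmeas.ennreal_toReal
  have hρ0 : ∀ a, 0 ≤ ρ a := fun a => ENNReal.toReal_nonneg
  have hρdens : ν = μ.withDensity fun a => ENNReal.ofReal (ρ a) := by
    rw [← hνF]
    refine (withDensity_congr_ae ?_).symm
    filter_upwards [hFlt] with a ha
    exact ENNReal.ofReal_toReal ha.ne
  -- a.e. facts about f
  have hfZ : ∀ᵐ a ∂μ, φ' a = 0 → (f a = 0 ∨ f a = 1) := by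
    filter_upwards [hφae] with a ha h0'
    rw [h0'] at ha
    rcases mul_eq_zero.mp ha with h | h
    · exact Or.inl h
    · rcases Real.log_eq_zero.mp h with h | h | h
      · exact Or.inl h
      · exact Or.inr h
      · exact absurd h (by have := hf a; intro hh; rw [hh] at this; linarith)
  set g : E → ℝ := fun a => φ' a ^ 2 / ψ' a with hgdef
  have hgmeas : Measurable g := (hφ'meas.pow_const 2).div hψ'meas
  have hfZc : ∀ᵐ a ∂μ, φ' a ≠ 0 → (0 < f a ∧ f a = g a) := by
    filter_upwards [hφae, hψae] with a ha hb hne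
    have hfa : f a * Real.log (f a) ≠ 0 := by rw [ha]; exact hne
    have hf0 : f a ≠ 0 := fun h => hfa (by rw [h]; ring)
    have hl0 : Real.log (f a) ≠ 0 := fun h => hfa (by rw [h]; ring)
    have hpos : 0 < f a := lt_of_le_of_ne (hf a) (Ne.symm hf0)
    refine ⟨hpos, ?_⟩
    have hd : ψ' a ≠ 0 := by
      rw [← hb]
      exact mul_ne_zero hf0 (pow_ne_zero 2 hl0)
    show f a = φ' a ^ 2 / ψ' a
    rw [eq_div_iff hd, ← ha, ← hb]
    ring
  -- identification of F on Zᶜ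
  have hγ : F =ᵐ[μ.restrict Zᶜ] fun a => ENNReal.ofReal (g a) := by
    refine ae_eq_of_forall_setLIntegral_eq_of_sigmaFinite hFmeas
      (ENNReal.measurable_ofReal.comp hgmeas) fun s hs _ => ?_
    rw [Measure.restrict_restrict hs]
    have h1 : ∫⁻ x in s ∩ Zᶜ, F x ∂μ = ν (s ∩ Zᶜ) := by
      rw [← hνF, withDensity_apply _ (hs.inter hZ.compl)]
    have h2 : ∫⁻ x in s ∩ Zᶜ, ENNReal.ofReal (g x) ∂μ = ν (s ∩ Zᶜ) := by
      rw [hdens, withDensity_apply _ (hs.inter hZ.compl)]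
      refine (lintegral_congr_ae ((ae_restrict_iff' (hs.inter hZ.compl)).mpr ?_)).symm
      filter_upwards [hfZc] with a ha hmem
      have hane : φ' a ≠ 0 := hmem.2
      rw [(ha hane).2]
    rw [h1, h2]
  -- F ≤ 1 a.e. on Z
  have hFle1 : ∀ᵐ a ∂μ.restrict Z, F a ≤ 1 := by
    refine ae_le_of_forall_setLIntegral_le_of_sigmaFinite hFmeas fun s hs _ => ?_
    rw [Measure.restrict_restrict hs]
    have h1 : ∫⁻ x in s ∩ Z, F x ∂μ = ν (s ∩ Z) := by
      rw [← hνF, withDensity_apply _ (hs.inter hZ)]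
    have h2 : ν (s ∩ Z) ≤ ∫⁻ x in s ∩ Z, 1 ∂μ := by
      rw [hdens, withDensity_apply _ (hs.inter hZ)]
      refine lintegral_mono_ae ?_
      rw [ae_restrict_iff' (hs.inter hZ)]
      filter_upwards [hfZ] with a ha hmem
      have h01 := ha hmem.2
      rcases h01 with h | h <;> rw [h] <;> simp
    rw [h1]
    exact h2
  -- the exceptional sets
  set Bset : ℕ → Set E := fun n =>
    Z ∩ {a | 1 / (n + 2 : ℝ) ≤ ρ a ∧ ρ a ≤ 1 - 1 / (n + 2 : ℝ)} with hBsetdef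
  have hBmeas : ∀ n, MeasurableSet (Bset n) := fun n =>
    hZ.inter ((measurableSet_le measurable_const hρmeas).inter
      (measurableSet_le hρmeas measurable_const))
  have hBnull : ∀ n : ℕ, μ (Bset n) = 0 := by
    intro n
    set δ : ℝ := 1 / (n + 2 : ℝ) with hδdef
    have hn2 : (0:ℝ) < n + 2 := by positivity
    have hδpos : 0 < δ := by positivity
    have hδlt : δ < 1 := by
      rw [hδdef, div_lt_one hn2]
      linarith [Nat.cast_nonneg (α := ℝ) n]
    by_contra hμB
    -- ν (Bset n) > 0
    have hνBpos : 0 < ν (Bset n) := by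
      have h1 : ν (Bset n) = ∫⁻ a in Bset n, F a ∂μ := by
        rw [← hνF, withDensity_apply _ (hBmeas n)]
      have h2 : ENNReal.ofReal δ * μ (Bset n) ≤ ∫⁻ a in Bset n, F a ∂μ := by
        rw [← setLIntegral_const (Bset n) (ENNReal.ofReal δ)]
        refine lintegral_mono_ae ?_
        rw [ae_restrict_iff' (hBmeas n)]
        refine Filter.Eventually.of_forall fun a ha => ?_
        rcases eq_or_ne (F a) ⊤ with h | h
        · rw [h]; exact le_top
        · rw [← ENNReal.ofReal_toReal h]
          exact ENNReal.ofReal_le_ofReal ha.2.1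
      have h3 : 0 < ENNReal.ofReal δ * μ (Bset n) :=
        ENNReal.mul_pos (ENNReal.ofReal_pos.mpr hδpos).ne' hμB
      rw [h1]
      exact lt_of_lt_of_le h3 h2
    have hνB2 : ν (Bset n) = ∫⁻ a in Bset n, ENNReal.ofReal (f a) ∂μ := by
      rw [hdens, withDensity_apply _ (hBmeas n)]
    rw [hνB2] at hνBpos
    obtain ⟨c, S, hcpos, hSmeas, hSpos, hcle⟩ := exists_pos_of_lintegral_pos hνBpos
    rw [Measure.restrict_apply hSmeas] at hSpos
    set S' := S ∩ Bset n with hS'def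
    have hS'meas : MeasurableSet S' := hSmeas.inter (hBmeas n)
    have hf1 : ∀ᵐ a ∂μ, a ∈ S' → f a = 1 := by
      filter_upwards [hfZ] with a ha hmem
      have haZ : φ' a = 0 := hmem.2.1
      rcases ha haZ with h | h
      · exfalso
        have hc2 := hcle a hmem.1
        rw [h, ENNReal.ofReal_zero, le_zero_iff] at hc2
        exact hcpos.ne' hc2
      · exact h
    have hν1 : ν S' = μ S' := by
      rw [hdens, withDensity_apply _ hS'meas]
      have he : ∀ᵐ a ∂μ.restrict S', ENNReal.ofReal (f a) = (1:ENNReal) := by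
        refine (ae_restrict_iff' hS'meas).mpr ?_
        filter_upwards [hf1] with a ha hmem
        rw [ha hmem]
        simp
      rw [lintegral_congr_ae he, setLIntegral_one]
    have hν2 : ν S' ≤ ENNReal.ofReal (1 - δ) * μ S' := by
      rw [← hνF, withDensity_apply _ hS'meas,
        ← setLIntegral_const S' (ENNReal.ofReal (1 - δ))]
      refine lintegral_mono_ae ?_
      rw [ae_restrict_iff' hS'meas]
      refine Filter.Eventually.of_forall fun a ha => ?_
      have haB := ha.2
      have hδρ : δ ≤ ρ a := haB.2.1
      have hρδ : ρ a ≤ 1 - δ := haB.2.2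
      have hFne : F a ≠ ⊤ := by
        intro h
        have : ρ a = 0 := by rw [hρdef]; simp [h]
        rw [this] at hδρ
        linarith
      rw [← ENNReal.ofReal_toReal hFne]
      exact ENNReal.ofReal_le_ofReal hρδ
    rw [hν1] at hν2
    have hlt : ENNReal.ofReal (1 - δ) * μ S' < 1 * μ S' := by
      rw [mul_comm _ (μ S'), mul_comm 1 (μ S')]
      refine ENNReal.mul_lt_mul_right hSpos.ne' (measure_lt_top μ S').ne ?_
      exact ENNReal.ofReal_lt_one.mpr (by linarith)
    rw [one_mul] at hlt
    exact absurd hν2 (not_le.mpr hlt)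
  -- conclude F ∈ {0,1} a.e. on Z
  have hδ' : ∀ᵐ a ∂μ, a ∈ Z → (F a = 0 ∨ F a = 1) := by
    have hUnull : μ (⋃ n, Bset n) = 0 := measure_iUnion_null hBnull
    have hFle1' : ∀ᵐ a ∂μ, a ∈ Z → F a ≤ 1 := (ae_restrict_iff' hZ).mp hFle1
    filter_upwards [hFle1', measure_eq_zero_iff_ae_notMem.mp hUnull] with a h1 h2 haZ
    have hle1 : F a ≤ 1 := h1 haZ
    have hne : F a ≠ ⊤ := (lt_of_le_of_lt hle1 ENNReal.one_lt_top).ne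
    have hr1 : ρ a ≤ 1 := by
      rw [hρdef]
      calc (F a).toReal ≤ (1 : ENNReal).toReal := ENNReal.toReal_mono ENNReal.one_ne_top hle1
        _ = 1 := by simp
    have hr0 : 0 ≤ ρ a := hρ0 a
    have hρ01 : ρ a = 0 ∨ ρ a = 1 := by
      by_contra hcon
      push_neg at hcon
      obtain ⟨h01, h11⟩ := hcon
      have hrpos : 0 < ρ a := lt_of_le_of_ne hr0 (Ne.symm h01)
      have hrlt : ρ a < 1 := lt_of_le_of_ne hr1 h11
      obtain ⟨m, hm⟩ := exists_nat_one_div_lt (lt_min hrpos (by linarith : (0:ℝ) < 1 - ρ a))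
      have hmono : 1 / (m + 2 : ℝ) ≤ 1 / (m + 1 : ℝ) := by
        apply one_div_le_one_div_of_le
        · positivity
        · linarith
      have hmin1 := lt_min_iff.mp hm
      refine h2 (Set.mem_iUnion.mpr ⟨m, ⟨haZ, ?_, ?_⟩⟩)
      · linarith [hmin1.1]
      · linarith [hmin1.2]
    rcases hρ01 with h | h
    · left
      rcases (ENNReal.toReal_eq_zero_iff _).mp h with h' | h'
      · exact h'
      · exact absurd h' hne
    · right
      rw [← ENNReal.toReal_eq_one_iff]
      exact h
  -- assemble
  have hγ' : ∀ᵐ a ∂μ, a ∈ Zᶜ → F a = ENNReal.ofReal (g a) :=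
    (ae_restrict_iff' hZ.compl).mp hγ
  have hkey : ∀ᵐ a ∂μ, (ρ a * Real.log (ρ a) = f a * Real.log (f a)) ∧
      (ρ a * Real.log (ρ a) ^ 2 = f a * Real.log (f a) ^ 2) := by
    filter_upwards [hγ', hδ', hfZ, hfZc, hφae, hψae] with a h1 h2 h3 h4 h5 h6
    by_cases hz : φ' a = 0
    · have hF01 := h2 hz
      have hf01 := h3 hz
      have hρ01 : ρ a = 0 ∨ ρ a = 1 := by
        rcases hF01 with h | h
        · left; rw [hρdef]; simp [h]
        · right; rw [hρdef]; simp [h]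
      have e1 : ρ a * Real.log (ρ a) = 0 := by
        rcases hρ01 with h | h <;> rw [h] <;> simp
      have e2 : ρ a * Real.log (ρ a) ^ 2 = 0 := by
        rcases hρ01 with h | h <;> rw [h] <;> simp
      have e3 : f a * Real.log (f a) = 0 := by
        rcases hf01 with h | h <;> rw [h] <;> simp
      have e4 : f a * Real.log (f a) ^ 2 = 0 := by
        rcases hf01 with h | h <;> rw [h] <;> simp
      rw [e1, e2, e3, e4]
      exact ⟨rfl, rfl⟩
    · have hFg : F a = ENNReal.ofReal (g a) := h1 hz
      obtain ⟨hfpos, hfg⟩ := h4 hz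
      have hρf : ρ a = f a := by
        rw [hρdef]
        show (F a).toReal = f a
        rw [hFg, ENNReal.toReal_ofReal (by rw [← hfg]; exact hfpos.le)]
        exact hfg.symm
      rw [hρf]
      exact ⟨rfl, rfl⟩
  exact ⟨ρ, hρmeas, hρ0, hρdens,
    by filter_upwards [hkey] with a h; exact h.1,
    by filter_upwards [hkey] with a h; exact h.2⟩

lemma reverse_pinsker_meas
    (μ ν : Measure E) [IsProbabilityMeasure μ] [IsProbabilityMeasure ν]
    (ρ : E → ℝ) (hm : Measurable ρ) (h0 : ∀ a, 0 ≤ ρ a)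
    (hdens : ν = μ.withDensity fun a => ENNReal.ofReal (ρ a))
    (hEnt : Integrable (fun a => ρ a * Real.log (ρ a)) μ)
    (hVarent : Integrable (fun a => ρ a * (Real.log (ρ a)) ^ 2) μ)
    (hTV : tvDist ν μ < 1) :
    (∫ a, ρ a * Real.log (ρ a) ∂μ) * (1 - tvDist ν μ) ≤
      1 + Real.sqrt ((∫ a, ρ a * (Real.log (ρ a)) ^ 2 ∂μ)
          - (∫ a, ρ a * Real.log (ρ a) ∂μ) ^ 2) := by
  set T := tvDist ν μ with hT
  set D := ∫ a, ρ a * Real.log (ρ a) ∂μ with hD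
  set S := ∫ a, ρ a * (Real.log (ρ a)) ^ 2 ∂μ with hS
  set V := S - D ^ 2 with hV
  -- basic integrability of ρ and total mass 1
  have hlint : ∫⁻ a, ENNReal.ofReal (ρ a) ∂μ = 1 := by
    have := measure_univ (μ := ν)
    rwa [hdens, withDensity_apply _ MeasurableSet.univ, Measure.restrict_univ] at this
  have hρint : Integrable ρ μ := by
    have h := integrable_toReal_of_lintegral_ne_top
      (hm.ennreal_ofReal.aemeasurable) (by rw [hlint]; exact ENNReal.one_ne_top)
    refine h.congr (Filter.Eventually.of_forall fun a => ?_)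
    exact ENNReal.toReal_ofReal (h0 a)
  have hρ1 : ∫ a, ρ a ∂μ = 1 := by
    rw [integral_eq_lintegral_of_nonneg_ae (Filter.Eventually.of_forall h0)
      hm.aestronglyMeasurable, hlint]
    simp
  -- second moment around D
  have hWfun : (fun a => ρ a * (Real.log (ρ a) - D) ^ 2)
      = fun a => ρ a * (Real.log (ρ a)) ^ 2 - (2 * D) * (ρ a * Real.log (ρ a)) + D ^ 2 * ρ a := by
    funext a; ring
  have hWint : Integrable (fun a => ρ a * (Real.log (ρ a) - D) ^ 2) μ := by
    rw [hWfun]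
    exact (hVarent.sub (hEnt.const_mul _)).add (hρint.const_mul _)
  have h2i : Integrable (fun a => 2 * D * (ρ a * Real.log (ρ a))) μ := hEnt.const_mul _
  have h3i : Integrable (fun a => D ^ 2 * ρ a) μ := hρint.const_mul _
  have hWval : ∫ a, ρ a * (Real.log (ρ a) - D) ^ 2 ∂μ = V := by
    have eadd := integral_add (μ := μ)
      (f := fun a => ρ a * Real.log (ρ a) ^ 2 - 2 * D * (ρ a * Real.log (ρ a)))
      (g := fun a => D ^ 2 * ρ a) (hVarent.sub h2i) h3i
    have esub := integral_sub (μ := μ)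
      (f := fun a => ρ a * Real.log (ρ a) ^ 2)
      (g := fun a => 2 * D * (ρ a * Real.log (ρ a))) hVarent h2i
    rw [hWfun, eadd, esub, integral_const_mul, integral_const_mul, hρ1, ← hD, ← hS]
    ring
  have hV0 : 0 ≤ V := by
    rw [← hWval]
    exact integral_nonneg fun a => mul_nonneg (h0 a) (sq_nonneg _)
  -- first absolute moment bound
  have hIint : Integrable (fun a => ρ a * |Real.log (ρ a) - D|) μ := by
    refine Integrable.mono ((hWint.add hρint).div_const 2) ?_ ?_
    · exact (hm.mul ((hm.log.sub measurable_const).abs)).aestronglyMeasurable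
    · refine Filter.Eventually.of_forall fun a => ?_
      have h1 : |Real.log (ρ a) - D| ≤ ((Real.log (ρ a) - D) ^ 2 + 1) / 2 := by
        nlinarith [sq_nonneg (|Real.log (ρ a) - D| - 1), abs_nonneg (Real.log (ρ a) - D),
          sq_abs (Real.log (ρ a) - D)]
      have h2 : ρ a * |Real.log (ρ a) - D| ≤ (ρ a * (Real.log (ρ a) - D) ^ 2 + ρ a) / 2 := by
        nlinarith [h0 a, mul_le_mul_of_nonneg_left h1 (h0 a)]
      rw [Real.norm_eq_abs, abs_of_nonneg (mul_nonneg (h0 a) (abs_nonneg _)),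
        Real.norm_eq_abs]
      refine h2.trans (le_abs_self _)
  have habs : ∫ a, ρ a * |Real.log (ρ a) - D| ∂μ ≤ Real.sqrt V := by
    have key : ∀ c : ℝ, 0 < c → ∫ a, ρ a * |Real.log (ρ a) - D| ∂μ ≤ (V + c ^ 2) / (2 * c) := by
      intro c hc
      have hpt : ∀ a, ρ a * |Real.log (ρ a) - D| ≤
          (ρ a * (Real.log (ρ a) - D) ^ 2 + c ^ 2 * ρ a) / (2 * c) := by
        intro a
        rw [le_div_iff₀ (by positivity)]
        have : 2 * c * |Real.log (ρ a) - D| ≤ (Real.log (ρ a) - D) ^ 2 + c ^ 2 := by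
          nlinarith [sq_nonneg (|Real.log (ρ a) - D| - c), sq_abs (Real.log (ρ a) - D)]
        nlinarith [h0 a]
      calc ∫ a, ρ a * |Real.log (ρ a) - D| ∂μ
          ≤ ∫ a, (ρ a * (Real.log (ρ a) - D) ^ 2 + c ^ 2 * ρ a) / (2 * c) ∂μ := by
            refine integral_mono hIint ?_ hpt
            exact (hWint.add (hρint.const_mul _)).div_const _
        _ = (V + c ^ 2) / (2 * c) := by
            rw [integral_div, integral_add hWint (hρint.const_mul _), integral_const_mul,
              hρ1, hWval]
            ring
    rcases eq_or_lt_of_le hV0 with hVe | hVp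
    · rw [← hVe, Real.sqrt_zero]
      by_contra hlt
      push_neg at hlt
      have h := key (∫ a, ρ a * |Real.log (ρ a) - D| ∂μ) hlt
      rw [← hVe] at h
      have hne : (∫ a, ρ a * |Real.log (ρ a) - D| ∂μ) ≠ 0 := ne_of_gt hlt
      have heq : (0 + (∫ a, ρ a * |Real.log (ρ a) - D| ∂μ) ^ 2) /
          (2 * ∫ a, ρ a * |Real.log (ρ a) - D| ∂μ)
          = (∫ a, ρ a * |Real.log (ρ a) - D| ∂μ) / 2 := by
        field_simp
        ring
      rw [heq] at h
      linarith
    · have h := key (Real.sqrt V) (Real.sqrt_pos.mpr hVp)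
      have hs : Real.sqrt V * Real.sqrt V = V := Real.mul_self_sqrt hV0
      have hne : Real.sqrt V ≠ 0 := ne_of_gt (Real.sqrt_pos.mpr hVp)
      have heq : (V + Real.sqrt V ^ 2) / (2 * Real.sqrt V) = Real.sqrt V := by
        rw [Real.sq_sqrt hV0]
        field_simp
        nlinarith [hs]
      rwa [heq] at h
  -- the set where ρ > 1
  set A : Set E := {a | 1 < ρ a} with hA
  have hAmeas : MeasurableSet A := measurableSet_lt measurable_const hm
  have hbdd : BddAbove (Set.range fun B : {B : Set E // MeasurableSet B} =>
      |(ν B.1).toReal - (μ B.1).toReal|) := by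
    refine ⟨1, ?_⟩
    rintro x ⟨B, rfl⟩
    have h1 : (ν B.1).toReal ≤ 1 := by
      rw [← ENNReal.toReal_one]
      exact ENNReal.toReal_mono ENNReal.one_ne_top prob_le_one
    have h2 : (μ B.1).toReal ≤ 1 := by
      rw [← ENNReal.toReal_one]
      exact ENNReal.toReal_mono ENNReal.one_ne_top prob_le_one
    have h3 : (0:ℝ) ≤ (ν B.1).toReal := ENNReal.toReal_nonneg
    have h4 : (0:ℝ) ≤ (μ B.1).toReal := ENNReal.toReal_nonneg
    exact abs_le.mpr ⟨by linarith, by linarith⟩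
  have htA : (ν A).toReal - (μ A).toReal ≤ T := by
    have h := le_ciSup hbdd (⟨A, hAmeas⟩ : {B : Set E // MeasurableSet B})
    exact (le_abs_self _).trans h
  have hνA : (ν A).toReal = ∫ a in A, ρ a ∂μ := by
    have e : ν A = ∫⁻ a in A, ENNReal.ofReal (ρ a) ∂μ := by
      rw [hdens, withDensity_apply _ hAmeas]
    rw [e, integral_eq_lintegral_of_nonneg_ae (Filter.Eventually.of_forall fun a => h0 a)
      hm.aestronglyMeasurable.restrict]
  have hμA : (μ A).toReal = ∫ a in A, (1:ℝ) ∂μ := by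
    rw [setIntegral_const]; simp; rfl
  have hmin : ∀ a, min (ρ a) 1 = ρ a - A.indicator (fun a => ρ a - 1) a := by
    intro a
    by_cases h : a ∈ A
    · rw [Set.indicator_of_mem h, min_eq_right (le_of_lt (by exact h : 1 < ρ a))]
      ring
    · rw [Set.indicator_of_notMem h, min_eq_left (not_lt.mp h)]
      ring
  have hindint : Integrable (A.indicator fun a => ρ a - 1) μ :=
    (hρint.sub (integrable_const 1)).indicator hAmeas
  have hminint : Integrable (fun a => min (ρ a) 1) μ := by
    refine (hρint.sub hindint).congr ?_
    exact Filter.Eventually.of_forall fun a => (hmin a).symm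
  have hmval : ∫ a, min (ρ a) 1 ∂μ = 1 - ((ν A).toReal - (μ A).toReal) := by
    have e : ∫ a, min (ρ a) 1 ∂μ = ∫ a, (ρ a - A.indicator (fun a => ρ a - 1) a) ∂μ :=
      integral_congr_ae (Filter.Eventually.of_forall fun a => hmin a)
    have e2 := integral_sub (μ := μ) (f := ρ) (g := A.indicator fun a => ρ a - 1) hρint hindint
    rw [e, e2, hρ1, integral_indicator hAmeas,
      integral_sub hρint.integrableOn (integrableOn_const (measure_lt_top μ A).ne),
      hνA, hμA]
  have hhint : Integrable (fun a => min (ρ a) 1 * Real.log (ρ a)) μ := by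
    refine hEnt.mono ((hm.min measurable_const).mul hm.log).aestronglyMeasurable ?_
    refine Filter.Eventually.of_forall fun a => ?_
    rw [Real.norm_eq_abs, Real.norm_eq_abs, abs_mul, abs_mul]
    refine mul_le_mul_of_nonneg_right ?_ (abs_nonneg _)
    rw [abs_of_nonneg (le_min (h0 a) zero_le_one), abs_of_nonneg (h0 a)]
    exact min_le_left _ _
  have hh1 : ∫ a, min (ρ a) 1 * Real.log (ρ a) ∂μ ≤ 1 := by
    have hmono : ∫ a, min (ρ a) 1 * Real.log (ρ a) ∂μ ≤ ∫ a, ρ a ∂μ := by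
      refine integral_mono hhint hρint fun a => ?_
      rcases le_or_gt (ρ a) 1 with h | h
      · rw [min_eq_left h]
        have hl : Real.log (ρ a) ≤ 0 := Real.log_nonpos (h0 a) h
        nlinarith [h0 a]
      · rw [min_eq_right h.le, one_mul]
        have := Real.log_le_sub_one_of_pos (by linarith : (0:ℝ) < ρ a)
        linarith
    linarith [hρ1]
  have hcov : (∫ a, min (ρ a) 1 ∂μ) * D ≤ ∫ a, min (ρ a) 1 * Real.log (ρ a) ∂μ + Real.sqrt V := by
    have key : ∫ a, (D * min (ρ a) 1 - min (ρ a) 1 * Real.log (ρ a)) ∂μ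
        ≤ ∫ a, ρ a * |Real.log (ρ a) - D| ∂μ := by
      refine integral_mono ((hminint.const_mul D).sub hhint) hIint fun a => ?_
      have hmn : 0 ≤ min (ρ a) 1 := le_min (h0 a) zero_le_one
      have hmr : min (ρ a) 1 ≤ ρ a := min_le_left _ _
      rcases le_total (Real.log (ρ a)) D with hle | hle
      · calc D * min (ρ a) 1 - min (ρ a) 1 * Real.log (ρ a)
            = min (ρ a) 1 * (D - Real.log (ρ a)) := by ring
          _ ≤ ρ a * (D - Real.log (ρ a)) := mul_le_mul_of_nonneg_right hmr (by linarith)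
          _ ≤ ρ a * |Real.log (ρ a) - D| := by
              refine mul_le_mul_of_nonneg_left ?_ (h0 a)
              rw [abs_sub_comm]
              exact le_abs_self _
      · have hle2 : D * min (ρ a) 1 - min (ρ a) 1 * Real.log (ρ a) ≤ 0 := by nlinarith
        exact hle2.trans (mul_nonneg (h0 a) (abs_nonneg _))
    have e3 := integral_sub (μ := μ) (f := fun a => D * min (ρ a) 1)
      (g := fun a => min (ρ a) 1 * Real.log (ρ a)) (hminint.const_mul D) hhint
    rw [e3, integral_const_mul] at key
    have hcomm : D * ∫ a, min (ρ a) 1 ∂μ = (∫ a, min (ρ a) 1 ∂μ) * D := mul_comm _ _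
    linarith [key, habs]
  have hm1T : 1 - T ≤ ∫ a, min (ρ a) 1 ∂μ := by rw [hmval]; linarith
  rcases le_or_gt D 0 with hD0 | hD0
  · have hp : 0 ≤ (-D) * (1 - T) := mul_nonneg (neg_nonneg.mpr hD0) (sub_nonneg.mpr hTV.le)
    have he : (-D) * (1 - T) = -(D * (1 - T)) := by ring
    have hq : 0 ≤ Real.sqrt V := Real.sqrt_nonneg V
    linarith
  · have h1 : D * (1 - T) ≤ D * ∫ a, min (ρ a) 1 ∂μ := mul_le_mul_of_nonneg_left hm1T hD0.le
    have hcomm : D * ∫ a, min (ρ a) 1 ∂μ = (∫ a, min (ρ a) 1 ∂μ) * D := mul_comm _ _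
    linarith [hcov, hh1]

/-- **Reverse Pinsker inequality.** If `ν ≪ μ` has density `f`, with finite
entropy `Ent = ∫ f log f dμ` and finite varentropy
`Varent = ∫ f (log f)² dμ − Ent²`, and `TV(ν, μ) < 1`, then
`Ent ≤ (1 + √Varent)/(1 − TV)`. -/
theorem reverse_pinsker
    (μ ν : Measure E) [IsProbabilityMeasure μ] [IsProbabilityMeasure ν]
    (f : E → ℝ) (hf : ∀ a, 0 ≤ f a)
    (hdens : ν = μ.withDensity fun a => ENNReal.ofReal (f a))
    (hEnt : Integrable (fun a => f a * Real.log (f a)) μ)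
    (hVarent : Integrable (fun a => f a * (Real.log (f a)) ^ 2) μ)
    (hTV : tvDist ν μ < 1) :
    ∫ a, f a * Real.log (f a) ∂μ ≤
      (1 + Real.sqrt ((∫ a, f a * (Real.log (f a)) ^ 2 ∂μ)
          - (∫ a, f a * Real.log (f a) ∂μ) ^ 2)) / (1 - tvDist ν μ) := by
  obtain ⟨ρ, hm, h0, hd, he1, he2⟩ := exists_good_density μ ν f hf hdens hEnt hVarent
  have hI1 : ∫ a, f a * Real.log (f a) ∂μ = ∫ a, ρ a * Real.log (ρ a) ∂μ :=
    (integral_congr_ae he1).symm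
  have hI2 : ∫ a, f a * (Real.log (f a)) ^ 2 ∂μ = ∫ a, ρ a * (Real.log (ρ a)) ^ 2 ∂μ :=
    (integral_congr_ae he2).symm
  rw [hI1, hI2]
  rw [le_div_iff₀ (by linarith : (0:ℝ) < 1 - tvDist ν μ)]
  exact reverse_pinsker_meas μ ν ρ hm h0 hd (hEnt.congr he1.symm) (hVarent.congr he2.symm) hTV
end
end

section
/- (Mixing-time estimate from the spectral gap.) Let (E, ℰ, μ, (κ_t)) be as in the framework with spectral gap λ > 0. Let ν₀ be a probability measure on E with density f₀ with respect to μ and finite entropy Ent(ν₀) := ∫ f₀ log f₀ dμ, and let ν_t(A) := ∫ κ_t(x, A) ν₀(dx) be the law of the process at time t started from ν₀. Then for every ε ∈ (0,1) and every t ≥ (1 + Ent(ν₀)) / (λ ε), we have sup_{A∈ℰ} |ν_t(A) − μ(A)| ≤ ε; in particular t_mix(ε) ≤ (1 + Ent(ν₀)) / (λ ε). -/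
open MeasureTheory ProbabilityTheory Filter Topology
open scoped ENNReal

noncomputable section

variable {E : Type*} [MeasurableSpace E]

/-- The Markov operator `P_t f := ∫ f(y) κ_t(·, dy)`. -/
def Pop (κ : ℝ → Kernel E E) (t : ℝ) (f : E → ℝ) : E → ℝ :=
  fun x => ∫ y, f y ∂(κ t x)

/-- The framework: a measurable semigroup `(κ_t)_{t ≥ 0}` of Markov kernels on `E`
(`κ_0(x, ·) = δ_x` and `κ_{s+t}(x, A) = ∫ κ_t(y, A) κ_s(x, dy)`), reversible with
respect to the probability measure `μ`. -/
structure Framework (E : Type*) [MeasurableSpace E] where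
  μ : Measure E
  isProb : IsProbabilityMeasure μ
  κ : ℝ → Kernel E E
  isMarkov : ∀ t : ℝ, IsMarkovKernel (κ t)
  κ_zero : ∀ x : E, (κ 0) x = Measure.dirac x
  semigroup : ∀ s t : ℝ, 0 ≤ s → 0 ≤ t → κ (s + t) = (κ t).comp (κ s)
  reversible : ∀ t : ℝ, 0 ≤ t → ∀ A B : Set E, MeasurableSet A → MeasurableSet B →
    ∫ x in A, ((κ t) x B).toReal ∂μ = ∫ x in B, ((κ t) x A).toReal ∂μ

/-- The semigroup has spectral gap `lam`: for every `f ∈ L²(μ)` with `∫ f dμ = 0` and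
every `t ≥ 0`, `‖P_t f‖₂ ≤ e^{-lam t} ‖f‖₂`. -/
def HasSpectralGap (F : Framework E) (lam : ℝ) : Prop :=
  ∀ f : E → ℝ, MemLp f 2 F.μ → ∫ x, f x ∂F.μ = 0 → ∀ t : ℝ, 0 ≤ t →
    eLpNorm (Pop F.κ t f) 2 F.μ ≤ ENNReal.ofReal (Real.exp (-lam * t)) * eLpNorm f 2 F.μ

/-- Mixing time of the process started at `x`: `inf {t > 0 : TV(X_t) ≤ ε}` (`∞` if the
set is empty). -/
def tmix (F : Framework E) (x : E) (ε : ℝ) : ℝ≥0∞ :=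
  ⨅ (t : ℝ) (_ : 0 < t ∧ tvDist ((F.κ t) x) F.μ ≤ ε), ENNReal.ofReal t

/-!
If `ν₀ = f₀ μ` has finite entropy, the part of `ν₀` where `f₀ > e^L` has mass at most
`(Ent(ν₀) + e⁻¹) / L`, since `f₀ log f₀ ≥ L f₀` there and `f₀ log f₀ ≥ -e⁻¹` everywhere.
The rest of `ν₀` is dominated by `e^L μ`, so by Cauchy–Schwarz its contribution to
`ν_t(A) - μ(A) = ∫ (κ_t(·, A) - μ(A)) dν₀` is at most `e^{L/2} ‖P_t (1_A - μ(A))‖₂`,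
and the spectral gap together with `Var_μ(1_A) ≤ 1/4` bounds this by `e^{L/2 - λt} / 2`.
With `L = 2 (Ent(ν₀) + e⁻¹) / ε` both contributions are at most `ε / 2`
once `λt ≥ (1 + Ent(ν₀)) / ε`.
-/

open Real

namespace Real

lemma neg_exp_neg_one_le_mul_log {x : ℝ} (hx : 0 ≤ x) : -exp (-1) ≤ x * log x := by
  rcases hx.eq_or_lt with rfl | hx
  · simp [(exp_pos _).le]
  · have := mul_exp_neg_le_exp_neg_one (-log x)
    rw [neg_neg, exp_log hx] at this
    linarith

lemma exp_lt_iff_exp_mul_lt_mul_log {x L : ℝ} (hx : 0 ≤ x) (hL : 0 ≤ L) :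
    exp L < x ↔ exp L * L < x * log x := by
  constructor
  · intro h
    have hlog : L < log x := by rwa [lt_log_iff_exp_lt ((exp_pos L).trans h)]
    nlinarith [exp_pos L]
  · intro h
    by_contra! hle
    rcases hx.eq_or_lt with rfl | hx
    · simp only [zero_mul] at h
      nlinarith [exp_pos L]
    · have : log x ≤ L := by rwa [log_le_iff_le_exp hx]
      nlinarith [exp_pos L]

lemma sqrt_exp_mul_exp_le {H lam t ε : ℝ} (hε : 0 < ε) (h : 1 + H ≤ lam * t * ε) :
    √(exp (2 * (H + exp (-1)) / ε)) * exp (-lam * t) ≤ ε := by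
  -- after taking logarithms this is `-ε log ε ≤ e⁻¹ ≤ 1 - e⁻¹`
  have hc : exp (-1) < 1 / 2 := exp_neg_one_lt_half
  have hlog := neg_exp_neg_one_le_mul_log hε.le
  rw [← exp_half, ← exp_add, ← le_log_iff_exp_le hε]
  field_simp
  nlinarith

end Real

lemma ENNReal.ofReal_mul_rpow_half_le_ofReal_sqrt (M : ℝ) {m : ℝ≥0∞} (hm : m ≤ 1) :
    (ENNReal.ofReal M * m) ^ (1 / 2 : ℝ) ≤ ENNReal.ofReal √M :=
  calc (ENNReal.ofReal M * m) ^ (1 / 2 : ℝ) ≤ ENNReal.ofReal M ^ (1 / 2 : ℝ) := by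
        gcongr; exact mul_le_of_le_one_right' hm
    _ = ENNReal.ofReal √M := by
        rcases le_total 0 M with hM | hM
        · rw [Real.sqrt_eq_rpow, ENNReal.ofReal_rpow_of_nonneg hM (by norm_num)]
        · rw [ENNReal.ofReal_of_nonpos hM, Real.sqrt_eq_zero'.2 hM,
            ENNReal.zero_rpow_of_pos (by norm_num), ENNReal.ofReal_zero]

section MeasureBounds

variable {μ ν : Measure E}

lemma withDensity_restrict_compl_le_smul {g : E → ℝ≥0∞} {T : Set E} (hT : MeasurableSet T)
    {M : ℝ≥0∞} (hg : ∀ x ∉ T, g x ≤ M) : (μ.withDensity g).restrict Tᶜ ≤ M • μ :=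
  calc (μ.withDensity g).restrict Tᶜ = (μ.restrict Tᶜ).withDensity g :=
        restrict_withDensity hT.compl g
    _ ≤ (μ.restrict Tᶜ).withDensity fun _ ↦ M :=
        withDensity_mono ((ae_restrict_iff' hT.compl).2 (ae_of_all _ hg))
    _ = M • μ.restrict Tᶜ := withDensity_const M
    _ ≤ M • μ := by gcongr; exact Measure.restrict_le_self

lemma MeasureTheory.Measure.real_bind_eq_integral {α β : Type*} [MeasurableSpace α] [MeasurableSpace β]
    {ν : Measure α} (κ : Kernel α β) [IsFiniteKernel κ] {A : Set β} (hA : MeasurableSet A) :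
    (ν.bind κ).real A = ∫ x, (κ x).real A ∂ν := by
  rw [measureReal_def, Measure.bind_apply hA κ.aemeasurable]
  exact (integral_toReal (κ.measurable_coe hA).aemeasurable
    (ae_of_all _ fun x ↦ measure_lt_top _ _)).symm

lemma enorm_integral_le_of_le_smul {M : ℝ≥0∞} (hν : ν ≤ M • μ) {q : E → ℝ}
    (hq : AEStronglyMeasurable q ν) :
    ‖∫ x, q x ∂ν‖ₑ ≤ (M * ν Set.univ) ^ (1 / 2 : ℝ) * eLpNorm q 2 μ := by
  have h12 := eLpNorm_le_eLpNorm_mul_rpow_measure_univ (p := 1) (q := 2) one_le_two hq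
  have hdom : eLpNorm q 2 ν ≤ M ^ (1 / 2 : ℝ) * eLpNorm q 2 μ := by
    have := eLpNorm_mono_measure q (p := 2) hν
    rwa [eLpNorm_smul_measure_of_ne_top ENNReal.ofNat_ne_top, smul_eq_mul,
      show (1 / (2 : ℝ≥0∞)).toReal = 1 / 2 by norm_num] at this
  calc ‖∫ x, q x ∂ν‖ₑ ≤ eLpNorm q 1 ν := by
        rw [eLpNorm_one_eq_lintegral_enorm]; exact enorm_integral_le_lintegral_enorm q
    _ ≤ eLpNorm q 2 ν * ν Set.univ ^ (1 / 2 : ℝ) := by convert h12 using 3; norm_num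
    _ ≤ M ^ (1 / 2 : ℝ) * eLpNorm q 2 μ * ν Set.univ ^ (1 / 2 : ℝ) := by gcongr
    _ = (M * ν Set.univ) ^ (1 / 2 : ℝ) * eLpNorm q 2 μ := by
        rw [ENNReal.mul_rpow_of_nonneg _ _ (by norm_num)]; ring

lemma abs_integral_le_measureReal_add_abs_setIntegral_compl [IsFiniteMeasure ν] {q : E → ℝ}
    (hq : Measurable q) (hq1 : ∀ x, |q x| ≤ 1) {T : Set E} (hT : MeasurableSet T) :
    |∫ x, q x ∂ν| ≤ ν.real T + |∫ x in Tᶜ, q x ∂ν| := by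
  have hint : Integrable q ν :=
    (integrable_const (1 : ℝ)).mono' hq.aestronglyMeasurable (ae_of_all _ fun x ↦ hq1 x)
  rw [← integral_add_compl hT hint]
  refine (abs_add_le _ _).trans (add_le_add_left ?_ _)
  simpa using norm_setIntegral_le_of_norm_le_const (measure_lt_top ν T)
    fun x _ ↦ (Real.norm_eq_abs (q x)).trans_le (hq1 x)

lemma eLpNorm_sub_integral_le_of_mem_Icc [IsProbabilityMeasure μ] {X : E → ℝ} {a b : ℝ}
    (hX : ∀ᵐ x ∂μ, X x ∈ Set.Icc a b) (hXm : AEMeasurable X μ) :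
    eLpNorm (fun x ↦ X x - μ[X]) 2 μ ≤ ENNReal.ofReal ((b - a) / 2) := by
  have hab : a ≤ b := by obtain ⟨x, hx⟩ := hX.exists; exact hx.1.trans hx.2
  have hsq : eLpNorm (fun x ↦ X x - μ[X]) 2 μ ^ (2 : ℝ) = evariance X μ := by
    simpa [evariance] using
      eLpNorm_nnreal_pow_eq_lintegral (μ := μ) (f := fun x ↦ X x - μ[X]) (p := 2) two_ne_zero
  rw [← ENNReal.rpow_le_rpow_iff (z := 2) two_pos, hsq,
    ← (memLp_of_bounded hX hXm.aestronglyMeasurable 2).ofReal_variance_eq,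
    ENNReal.ofReal_rpow_of_nonneg (by linarith) zero_le_two]
  exact ENNReal.ofReal_le_ofReal (by simpa using variance_le_sq_of_bounded hX hXm)

end MeasureBounds

section Entropy

variable {μ : Measure E} [IsProbabilityMeasure μ] {f : E → ℝ}

lemma integral_mul_log_nonneg [IsProbabilityMeasure (μ.withDensity fun x ↦ ENNReal.ofReal (f x))]
    (hf : ∀ x, 0 ≤ f x) (hint : Integrable (fun x ↦ f x * log (f x)) μ) :
    0 ≤ ∫ x, f x * log (f x) ∂μ := by
  have hpt : ∀ x, f x ≤ f x * log (f x) + 1 := fun x ↦ by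
    linarith [self_sub_one_le_mul_log (hf x)]
  have hint1 : Integrable (fun x ↦ f x * log (f x) + 1) μ := hint.add (integrable_const 1)
  have h : (1 : ℝ≥0∞) ≤ ENNReal.ofReal (∫ x, f x * log (f x) ∂μ + 1) :=
    calc (1 : ℝ≥0∞) = ∫⁻ x, ENNReal.ofReal (f x) ∂μ := by
          rw [← setLIntegral_univ, ← withDensity_apply _ .univ, measure_univ]
      _ ≤ ∫⁻ x, ENNReal.ofReal (f x * log (f x) + 1) ∂μ :=
          lintegral_mono fun x ↦ ENNReal.ofReal_le_ofReal (hpt x)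
      _ = ENNReal.ofReal (∫ x, f x * log (f x) ∂μ + 1) := by
          rw [← ofReal_integral_eq_lintegral_ofReal hint1
            (ae_of_all _ fun x ↦ (hf x).trans (hpt x)),
            integral_add hint (integrable_const 1), integral_const, probReal_univ, one_smul]
  rw [ENNReal.one_le_ofReal] at h
  linarith

theorem exists_tail_of_integrable_mul_log (hf : ∀ x, 0 ≤ f x)
    (hint : Integrable (fun x ↦ f x * log (f x)) μ) {L : ℝ} (hL : 0 ≤ L) :
    ∃ T, MeasurableSet T ∧
      ENNReal.ofReal L * μ.withDensity (fun x ↦ ENNReal.ofReal (f x)) T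
        ≤ ENNReal.ofReal (∫ x, f x * log (f x) ∂μ + exp (-1)) ∧
      (μ.withDensity fun x ↦ ENNReal.ofReal (f x)).restrict Tᶜ ≤ ENNReal.ofReal (exp L) • μ := by
  set S := {x | exp L < f x}
  -- `f` need not be measurable, but `S` is a superlevel set of the integrable `f log f`.
  have hS : NullMeasurableSet S μ := by
    have : S = {x | exp L * L < f x * log (f x)} :=
      Set.ext fun x ↦ exp_lt_iff_exp_mul_lt_mul_log (hf x) hL
    rw [this]
    exact nullMeasurableSet_lt aemeasurable_const hint.aemeasurable
  set T := toMeasurable μ S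
  have hT : MeasurableSet T := measurableSet_toMeasurable μ S
  have hlarge : ∀ᵐ x ∂μ.restrict T, L * f x ≤ f x * log (f x) := by
    rw [Measure.restrict_toMeasurable (measure_ne_top _ _)]
    filter_upwards [ae_restrict_mem₀ hS] with x hx
    have : L < log (f x) := by rwa [lt_log_iff_exp_lt ((exp_pos L).trans hx)]
    nlinarith [hf x]
  have hint' : Integrable (fun x ↦ f x * log (f x) + exp (-1)) μ := hint.add (integrable_const _)
  have hc : ∀ x, 0 ≤ f x * log (f x) + exp (-1) := fun x ↦ by
    linarith [neg_exp_neg_one_le_mul_log (hf x)]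
  refine ⟨T, hT, ?_, withDensity_restrict_compl_le_smul hT fun x hx ↦
    ENNReal.ofReal_le_ofReal (not_lt.1 fun h ↦ hx (subset_toMeasurable μ S h))⟩
  calc ENNReal.ofReal L * μ.withDensity (fun x ↦ ENNReal.ofReal (f x)) T
      = ∫⁻ x in T, ENNReal.ofReal (L * f x) ∂μ := by
        rw [withDensity_apply _ hT, ← lintegral_const_mul' _ _ ENNReal.ofReal_ne_top]
        simp_rw [ENNReal.ofReal_mul hL]
    _ ≤ ∫⁻ x in T, ENNReal.ofReal (f x * log (f x) + exp (-1)) ∂μ := by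
        refine lintegral_mono_ae (hlarge.mono fun x hx ↦ ENNReal.ofReal_le_ofReal ?_)
        linarith [exp_pos (-1)]
    _ ≤ ∫⁻ x, ENNReal.ofReal (f x * log (f x) + exp (-1)) ∂μ := setLIntegral_le_lintegral _ _
    _ = ENNReal.ofReal (∫ x, f x * log (f x) ∂μ + exp (-1)) := by
        rw [← ofReal_integral_eq_lintegral_ofReal hint' (ae_of_all _ hc),
          integral_add hint (integrable_const _), integral_const, probReal_univ, one_smul]

end Entropy

namespace Framework

variable (F : Framework E) {lam t : ℝ} {A : Set E}

lemma pop_indicator_sub_const (hA : MeasurableSet A) (c : ℝ) :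
    Pop F.κ t (fun x ↦ A.indicator 1 x - c) = fun x ↦ (F.κ t x).real A - c := by
  have := F.isMarkov t
  funext x
  have hind : Integrable (A.indicator (1 : E → ℝ)) (F.κ t x) := (integrable_const 1).indicator hA
  rw [Pop, integral_sub hind (integrable_const c), integral_indicator_one hA, integral_const,
    probReal_univ, one_smul]

theorem eLpNorm_kernel_real_sub_le (hgap : HasSpectralGap F lam) (ht : 0 ≤ t)
    (hA : MeasurableSet A) :
    eLpNorm (fun x ↦ (F.κ t x).real A - F.μ.real A) 2 F.μ
      ≤ ENNReal.ofReal (exp (-lam * t) / 2) := by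
  have := F.isProb
  set g := fun x ↦ A.indicator 1 x - F.μ.real A
  have hind : MemLp (A.indicator (1 : E → ℝ)) 2 F.μ :=
    memLp_indicator_const 2 hA (1 : ℝ) (Or.inr (measure_ne_top _ _))
  have hmean : F.μ[A.indicator 1] = F.μ.real A := integral_indicator_one hA
  have hg : eLpNorm g 2 F.μ ≤ ENNReal.ofReal (1 / 2) := by
    simpa [hmean] using eLpNorm_sub_integral_le_of_mem_Icc (a := 0) (b := 1)
      (ae_of_all F.μ fun x ↦ by by_cases hx : x ∈ A <;> simp [hx]) hind.aemeasurable
  have hcenter : ∫ x, g x ∂F.μ = 0 := by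
    rw [integral_sub (hind.integrable one_le_two) (integrable_const _), hmean, integral_const,
      probReal_univ, one_smul, sub_self]
  rw [← F.pop_indicator_sub_const hA]
  calc _ ≤ ENNReal.ofReal (exp (-lam * t)) * eLpNorm g 2 F.μ :=
        hgap _ (hind.sub (memLp_const _)) hcenter t ht
    _ ≤ ENNReal.ofReal (exp (-lam * t)) * ENNReal.ofReal (1 / 2) := by gcongr
    _ = ENNReal.ofReal (exp (-lam * t) / 2) := by
        rw [← ENNReal.ofReal_mul (exp_pos _).le]; ring_nf

theorem tvDist_bind_le (hgap : HasSpectralGap F lam) {ν : Measure E} [IsProbabilityMeasure ν]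
    {T : Set E} (hT : MeasurableSet T) {M : ℝ} (hν : ν.restrict Tᶜ ≤ ENNReal.ofReal M • F.μ)
    (ht : 0 ≤ t) :
    tvDist (ν.bind (F.κ t)) F.μ ≤ ν.real T + √M * exp (-lam * t) / 2 := by
  have := F.isProb
  have := F.isMarkov t
  have : Nonempty {A : Set E // MeasurableSet A} := ⟨⟨∅, .empty⟩⟩
  refine ciSup_le fun ⟨A, hA⟩ ↦ ?_
  set q := fun x ↦ (F.κ t x).real A - F.μ.real A
  have hκm : Measurable fun x ↦ (F.κ t x).real A := ((F.κ t).measurable_coe hA).ennreal_toReal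
  have hqm : Measurable q := hκm.sub_const _
  have hq1 : ∀ x, |q x| ≤ 1 := fun x ↦
    abs_sub_le_of_nonneg_of_le measureReal_nonneg measureReal_le_one measureReal_nonneg
      measureReal_le_one
  have hdiff : (ν.bind (F.κ t)).real A - F.μ.real A = ∫ x, q x ∂ν := by
    rw [Measure.real_bind_eq_integral _ hA, integral_sub _ (integrable_const _), integral_const,
      probReal_univ, one_smul]
    exact (integrable_const (1 : ℝ)).mono' hκm.aestronglyMeasurable
      (ae_of_all _ fun x ↦ by simp [abs_of_nonneg measureReal_nonneg])
  have hcs : |∫ x in Tᶜ, q x ∂ν| ≤ √M * exp (-lam * t) / 2 := by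
    have h := (enorm_integral_le_of_le_smul hν hqm.aestronglyMeasurable).trans
      (mul_le_mul' (ENNReal.ofReal_mul_rpow_half_le_ofReal_sqrt M
        (by rw [Measure.restrict_apply_univ]; exact prob_le_one))
        (F.eLpNorm_kernel_real_sub_le hgap ht hA))
    rwa [Real.enorm_eq_ofReal_abs, ← ENNReal.ofReal_mul (Real.sqrt_nonneg M),
      ENNReal.ofReal_le_ofReal_iff (by positivity), ← mul_div_assoc] at h
  change |(ν.bind (F.κ t)).real A - F.μ.real A| ≤ _
  rw [hdiff]
  exact (abs_integral_le_measureReal_add_abs_setIntegral_compl hqm hq1 hT).trans (by linarith)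

end Framework

/-- **Mixing-time estimate from the spectral gap.** If the process starts from an
initial distribution `ν₀` with density `f₀` w.r.t. `μ` and finite entropy
`Ent(ν₀) = ∫ f₀ log f₀ dμ`, then for every `ε ∈ (0,1)` and every
`t ≥ (1 + Ent(ν₀))/(λε)`, the law `ν_t = ν₀ κ_t` satisfies `TV(ν_t, μ) ≤ ε`;
in particular `t_mix(ε) ≤ (1 + Ent(ν₀))/(λε)`. -/
theorem mixing_time_estimate
    (F : Framework E) (lam : ℝ) (hlam : 0 < lam) (hgap : HasSpectralGap F lam)
    (ν₀ : Measure E) (hν₀ : IsProbabilityMeasure ν₀)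
    (f₀ : E → ℝ) (hf₀ : ∀ a, 0 ≤ f₀ a)
    (hdens : ν₀ = F.μ.withDensity fun a => ENNReal.ofReal (f₀ a))
    (hint : Integrable (fun a => f₀ a * Real.log (f₀ a)) F.μ)
    (ε : ℝ) (hε : ε ∈ Set.Ioo (0 : ℝ) 1) :
    (∀ t : ℝ, (1 + ∫ a, f₀ a * Real.log (f₀ a) ∂F.μ) / (lam * ε) ≤ t →
      tvDist (ν₀.bind fun y => (F.κ t) y) F.μ ≤ ε) ∧
    (⨅ (t : ℝ) (_ : 0 < t ∧ tvDist (ν₀.bind fun y => (F.κ t) y) F.μ ≤ ε),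
        ENNReal.ofReal t)
      ≤ ENNReal.ofReal ((1 + ∫ a, f₀ a * Real.log (f₀ a) ∂F.μ) / (lam * ε)) := by
  obtain ⟨hε0, -⟩ := hε
  have := F.isProb
  subst hdens
  set Ent := ∫ a, f₀ a * log (f₀ a) ∂F.μ
  have hEnt : 0 ≤ Ent := integral_mul_log_nonneg hf₀ hint
  set L := 2 * (Ent + exp (-1)) / ε
  obtain ⟨T, hT, htail, hbulk⟩ :=
    exists_tail_of_integrable_mul_log hf₀ hint (L := L) (by positivity)
  have hp : (F.μ.withDensity fun a => ENNReal.ofReal (f₀ a)).real T ≤ ε / 2 := by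
    have h := ENNReal.toReal_mono ENNReal.ofReal_ne_top htail
    rw [ENNReal.toReal_mul, ENNReal.toReal_ofReal (by positivity),
      ENNReal.toReal_ofReal (by positivity)] at h
    refine le_of_mul_le_mul_left (h.trans_eq ?_) (by positivity : 0 < L)
    simp only [L, Ent]
    field_simp
  have key : ∀ t, (1 + Ent) / (lam * ε) ≤ t →
      tvDist ((F.μ.withDensity fun a => ENNReal.ofReal (f₀ a)).bind (F.κ t)) F.μ ≤ ε := by
    intro t ht
    have hlt : 1 + Ent ≤ lam * t * ε := by
      rw [div_le_iff₀ (by positivity)] at ht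
      linarith
    linarith [F.tvDist_bind_le hgap hT hbulk (le_trans (by positivity) ht),
      sqrt_exp_mul_exp_le hε0 hlt]
  exact ⟨key, iInf₂_le_of_le _ ⟨by positivity, key _ le_rfl⟩ le_rfl⟩
end
end

section
/- (Propagated mixing-time estimate.) Let (E, ℰ, μ, (κ_t), x) be as in the framework with spectral gap λ > 0, the process started at the point x. Then for every ε ∈ (0,1) and every t > 0 such that the law ν_t = κ_t(x,·) has density f_t with respect to μ with finite entropy Ent(X_t) = ∫ f_t log f_t dμ, we have t_mix(ε) ≤ t + (1 + Ent(X_t)) / (λ ε). -/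
open MeasureTheory ProbabilityTheory Filter Topology
open scoped ENNReal

noncomputable section

variable {E : Type*} [MeasurableSpace E]

/-!
Write `ν_t = m μ` with a measurable density `m ≤ f_t` and truncate it at a level `K`,
`M = min m K`. An entropy version of Markov's inequality bounds the mass `∫ (m - M)` above
`K` by `(Ent + e⁻¹) / log K`. The bounded part is carried by the reversible semigroup: by
self-adjointness `ν_{t+s}(A) ≥ ∫ M · κ_s(·, A) dμ = (∫ M) μ(A) + ∫_A P_s (M - ∫ M) dμ`, and
since `P_s (M - ∫ M)` has mean zero, `-∫_A` of it is at most half its `L¹` norm, hence at most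
`e^{-λs} √Var(M) / 2 ≤ e^{-λs} √K / 2` by the spectral gap. Taking `√K = ε e^{λs}` with
`λ s ε = 1 + Ent` makes both errors at most `ε / 2`.
-/

open Real

lemma neg_inv_exp_one_le_mul_log {x : ℝ} (hx : 0 ≤ x) : -(exp 1)⁻¹ ≤ x * log x := by
  rcases hx.eq_or_lt with rfl | hx
  · simp only [zero_mul, Left.neg_nonpos_iff, inv_nonneg]
    positivity
  · have h := add_one_le_exp (-log x - 1)
    rw [exp_sub, exp_neg, exp_log hx] at h
    have h' : -log x * x ≤ x⁻¹ / exp 1 * x := mul_le_mul_of_nonneg_right (by linarith) hx.le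
    rw [div_mul_eq_mul_div, inv_mul_cancel₀ hx.ne', one_div] at h'
    linarith

lemma two_mul_inv_exp_one_lt_one : 2 * (exp 1)⁻¹ < 1 := by
  have := exp_one_gt_d9
  rw [mul_inv_lt_iff₀ (exp_pos 1)]
  linarith

lemma sub_min_mul_log_le {m f K : ℝ} (hm : 0 ≤ m) (hmf : m ≤ f) (hK : 1 ≤ K) :
    (m - min m K) * log K ≤ f * log f + (exp 1)⁻¹ := by
  have hf := neg_inv_exp_one_le_mul_log (hm.trans hmf)
  rcases le_total m K with hmK | hKm
  · rw [min_eq_left hmK, sub_self, zero_mul]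
    linarith
  · have hlogK := log_nonneg hK
    calc (m - min m K) * log K ≤ m * log m := by
          rw [min_eq_right hKm]
          exact mul_le_mul (by linarith) (log_le_log (by linarith) hKm) hlogK hm
      _ ≤ f * log f :=
          mul_le_mul hmf (log_le_log (by linarith) hmf) (log_nonneg (hK.trans hKm)) (hm.trans hmf)
      _ ≤ f * log f + (exp 1)⁻¹ := by
          simp only [le_add_iff_nonneg_right, inv_nonneg]
          positivity

section Integrals

variable {μ : Measure E}

lemma neg_inv_exp_one_le_integral_mul_log [IsProbabilityMeasure μ] {f : E → ℝ} (hf0 : 0 ≤ f)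
    (hf : Integrable (fun a => f a * log (f a)) μ) : -(exp 1)⁻¹ ≤ ∫ a, f a * log (f a) ∂μ := by
  simpa using integral_mono (integrable_const _) hf fun a => neg_inv_exp_one_le_mul_log (hf0 a)

/-- `∫ m - ∫ min m K` is the mass of `m` above the level `K`: an entropy version of Markov's
inequality. -/
lemma integral_sub_integral_min_mul_log_le [IsProbabilityMeasure μ] {m f : E → ℝ}
    (hm : Integrable m μ) (hm0 : 0 ≤ m) (hmf : m ≤ f)
    (hf : Integrable (fun a => f a * log (f a)) μ) {K : ℝ} (hK : 1 ≤ K) :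
    (∫ a, m a ∂μ - ∫ a, min (m a) K ∂μ) * log K ≤ ∫ a, f a * log (f a) ∂μ + (exp 1)⁻¹ := by
  have hmin : Integrable (fun a => min (m a) K) μ := hm.inf (integrable_const K)
  calc (∫ a, m a ∂μ - ∫ a, min (m a) K ∂μ) * log K = ∫ a, (m a - min (m a) K) * log K ∂μ := by
        rw [integral_mul_const, integral_sub hm hmin]
    _ ≤ ∫ a, (f a * log (f a) + (exp 1)⁻¹) ∂μ :=
        integral_mono ((hm.sub hmin).mul_const _) (hf.add (integrable_const _))
          fun a => sub_min_mul_log_le (hm0 a) (hmf a) hK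
    _ = ∫ a, f a * log (f a) ∂μ + (exp 1)⁻¹ := by
        rw [integral_add hf (integrable_const _)]
        simp

lemma neg_setIntegral_le_half_integral_abs {h : E → ℝ} (hh : Integrable h μ)
    (h0 : ∫ x, h x ∂μ = 0) {A : Set E} (hA : MeasurableSet A) :
    -∫ x in A, h x ∂μ ≤ (∫ x, |h x| ∂μ) / 2 := by
  have hsplit := integral_add_compl hA hh
  have habs := integral_add_compl hA hh.abs
  have hin : -∫ x in A, h x ∂μ ≤ ∫ x in A, |h x| ∂μ :=
    (neg_le_abs _).trans (abs_integral_le_integral_abs)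
  have hout : ∫ x in Aᶜ, h x ∂μ ≤ ∫ x in Aᶜ, |h x| ∂μ :=
    (le_abs_self _).trans (abs_integral_le_integral_abs)
  linarith

lemma eLpNorm_two_eq_ofReal_sqrt_integral_sq {f : E → ℝ} (hf : MemLp f 2 μ) :
    eLpNorm f 2 μ = ENNReal.ofReal √(∫ a, f a ^ 2 ∂μ) := by
  rw [hf.eLpNorm_eq_integral_rpow_norm two_ne_zero ENNReal.ofNat_ne_top, sqrt_eq_rpow]
  norm_num [Real.norm_eq_abs, sq_abs]

lemma exists_measurable_le_withDensity_ofReal_eq (μ : Measure E) {f : E → ℝ} (hf : 0 ≤ f)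
    [IsFiniteMeasure (μ.withDensity fun a => ENNReal.ofReal (f a))] :
    ∃ m : E → ℝ, Measurable m ∧ 0 ≤ m ∧ m ≤ f ∧
      μ.withDensity (fun a => ENNReal.ofReal (m a)) =
        μ.withDensity fun a => ENNReal.ofReal (f a) := by
  -- `f` need not be measurable: a measurable minorant with the same integral gives a smaller
  -- measure of the same finite mass.
  obtain ⟨g, hg, hgf, hgint⟩ := exists_measurable_le_lintegral_eq μ fun a => ENNReal.ofReal (f a)
  have hg_ne_top a : g a ≠ ⊤ := ne_top_of_le_ne_top ENNReal.ofReal_ne_top (hgf a)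
  refine ⟨fun a => (g a).toReal, hg.ennreal_toReal, fun a => ENNReal.toReal_nonneg,
    fun a => ENNReal.toReal_le_of_le_ofReal (hf a) (hgf a), ?_⟩
  simp_rw [ENNReal.ofReal_toReal (hg_ne_top _)]
  have hle := withDensity_mono (μ := μ) (ae_of_all _ hgf)
  have := isFiniteMeasure_of_le _ hle
  refine Measure.eq_of_le_of_measure_univ_eq hle ?_
  simp [withDensity_apply _ MeasurableSet.univ, hgint]

end Integrals

lemma tvDist_le_of_forall_measureReal_sub_le {ν μ : Measure E} [IsProbabilityMeasure ν]
    [IsProbabilityMeasure μ] {ε : ℝ} (h : ∀ A, MeasurableSet A → μ.real A - ν.real A ≤ ε) :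
    tvDist ν μ ≤ ε := by
  have : Nonempty {A : Set E // MeasurableSet A} := ⟨⟨∅, .empty⟩⟩
  refine ciSup_le fun ⟨A, hA⟩ => ?_
  change |ν.real A - μ.real A| ≤ ε
  have hcompl := h Aᶜ hA.compl
  rw [probReal_compl_eq_one_sub hA, probReal_compl_eq_one_sub hA] at hcompl
  exact abs_le.2 ⟨by linarith [h A hA], by linarith⟩

lemma measureReal_comp_apply {α β : Type*} [MeasurableSpace α] [MeasurableSpace β]
    (κ : Kernel α β) [IsFiniteKernel κ] (ρ : Measure α) {A : Set β} (hA : MeasurableSet A) :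
    (κ ∘ₘ ρ).real A = ∫ y, (κ y).real A ∂ρ := by
  rw [measureReal_def, Measure.bind_apply hA κ.aemeasurable,
    ← integral_toReal (κ.measurable_coe hA).aemeasurable (ae_of_all _ fun _ => measure_lt_top _ _)]
  rfl

namespace ProbabilityTheory.Kernel.IsReversible

variable {κ : Kernel E E} {μ : Measure E} [IsMarkovKernel κ]

lemma map_swap_compProd [IsFiniteMeasure μ] (h : κ.IsReversible μ) :
    (μ ⊗ₘ κ).map Prod.swap = μ ⊗ₘ κ := by
  refine Measure.ext_prod fun {A B} hA hB => ?_
  rw [Measure.map_apply measurable_swap (hA.prod hB), Set.preimage_swap_prod,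
    Measure.compProd_apply_prod hB hA, Measure.compProd_apply_prod hA hB, h hB hA]

lemma integral_integral_mul_comm [IsFiniteMeasure μ] (h : κ.IsReversible μ) {G H : E → ℝ}
    (hG : Measurable G) (hH : Measurable H) {CG CH : ℝ} (hGb : ∀ y, |G y| ≤ CG)
    (hHb : ∀ y, |H y| ≤ CH) :
    ∫ x, (∫ y, G y ∂κ x) * H x ∂μ = ∫ x, G x * ∫ y, H y ∂κ x ∂μ := by
  have key : ∀ {G H : E → ℝ} {CG CH : ℝ}, Measurable G → Measurable H → (∀ y, |G y| ≤ CG) →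
      (∀ y, |H y| ≤ CH) →
      ∫ p, G p.2 * H p.1 ∂(μ ⊗ₘ κ) = ∫ x, (∫ y, G y ∂κ x) * H x ∂μ := by
    intro G H CG CH hG hH hGb hHb
    refine (Measure.integral_compProd (Integrable.of_bound (by fun_prop) (CG * CH)
      (ae_of_all _ fun p => ?_))).trans ?_
    · rw [norm_mul, Real.norm_eq_abs, Real.norm_eq_abs]
      exact mul_le_mul (hGb _) (hHb _) (abs_nonneg _) ((abs_nonneg _).trans (hGb p.2))
    · simp_rw [integral_mul_const]
  calc ∫ x, (∫ y, G y ∂κ x) * H x ∂μ = ∫ p, G p.2 * H p.1 ∂((μ ⊗ₘ κ).map Prod.swap) := by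
        rw [h.map_swap_compProd, key hG hH hGb hHb]
    _ = ∫ p, H p.2 * G p.1 ∂(μ ⊗ₘ κ) := by
        rw [integral_map measurable_swap.aemeasurable (by fun_prop)]
        simp_rw [Prod.fst_swap, Prod.snd_swap, mul_comm]
    _ = ∫ x, G x * ∫ y, H y ∂κ x ∂μ := by
        simp_rw [key hH hG hHb hGb, mul_comm]

/-- Only the bounded minorant `M` of the density has to be transported: by self-adjointness
`∫ M · κ(·, A) dμ = ∫_A ∫ M dκ dμ`. -/
lemma measureReal_sub_comp_withDensity_le [IsProbabilityMeasure μ] (h : κ.IsReversible μ)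
    {m M : E → ℝ} (hm : Measurable m) (hm0 : 0 ≤ m) (hmi : Integrable m μ) (hM : Measurable M)
    (hM0 : 0 ≤ M) (hMm : M ≤ m) {K : ℝ} (hMK : ∀ a, M a ≤ K) (hM1 : ∫ a, M a ∂μ ≤ 1)
    {A : Set E} (hA : MeasurableSet A) :
    μ.real A - (κ ∘ₘ μ.withDensity fun a => ENNReal.ofReal (m a)).real A ≤
      (1 - ∫ a, M a ∂μ) - ∫ x in A, ∫ y, (M y - ∫ a, M a ∂μ) ∂κ x ∂μ := by
  set c := ∫ a, M a ∂μ
  set q : E → ℝ := fun y => (κ y).real A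
  have hq : Measurable q := (κ.measurable_coe hA).ennreal_toReal
  have hq0 y : 0 ≤ q y := measureReal_nonneg
  have hqb y : |q y| ≤ 1 := by rw [abs_of_nonneg (hq0 y)]; exact measureReal_le_one
  have hqi : Integrable q μ := Integrable.of_bound hq.aestronglyMeasurable 1 (ae_of_all _ hqb)
  have hMi : Integrable M μ := hmi.mono' hM.aestronglyMeasurable
    (ae_of_all _ fun a => by rw [Real.norm_eq_abs, abs_of_nonneg (hM0 a)]; exact hMm a)
  have hMb y : |M y - c| ≤ K + |c| :=
    (abs_sub _ _).trans (by rw [abs_of_nonneg (hM0 y)]; linarith [hMK y])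
  have hν : (κ ∘ₘ μ.withDensity fun a => ENNReal.ofReal (m a)).real A = ∫ y, m y * q y ∂μ := by
    rw [measureReal_comp_apply κ _ hA, integral_withDensity_eq_integral_toReal_smul
      hm.ennreal_ofReal (ae_of_all _ fun _ => ENNReal.ofReal_lt_top)]
    simp_rw [ENNReal.toReal_ofReal (hm0 _), smul_eq_mul, q]
  have hμ : μ.real A = ∫ y, q y ∂μ := by
    conv_lhs => rw [← h.invariant.def]
    exact measureReal_comp_apply κ μ hA
  have hsymm : ∫ x in A, ∫ y, (M y - c) ∂κ x ∂μ = ∫ y, (M y - c) * q y ∂μ := by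
    have hind y : |A.indicator (1 : E → ℝ) y| ≤ 1 := by by_cases hy : y ∈ A <;> simp [hy]
    have := h.integral_integral_mul_comm (hM.sub_const c) (measurable_one.indicator hA) hMb hind
    simp only [integral_indicator_one hA] at this
    rw [← this, ← integral_indicator hA]
    congr 1 with x
    by_cases hx : x ∈ A <;> simp [hx]
  have hmono : ∫ y, M y * q y ∂μ ≤ ∫ y, m y * q y ∂μ :=
    integral_mono (hMi.mul_bdd hq.aestronglyMeasurable (ae_of_all _ hqb))
      (hmi.mul_bdd hq.aestronglyMeasurable (ae_of_all _ hqb))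
      fun y => mul_le_mul_of_nonneg_right (hMm y) (hq0 y)
  have hlin : ∫ y, (M y - c) * q y ∂μ = ∫ y, M y * q y ∂μ - c * μ.real A := by
    rw [hμ, ← integral_const_mul, ← integral_sub (hMi.mul_bdd hq.aestronglyMeasurable
      (ae_of_all _ hqb)) (hqi.const_mul c)]
    simp_rw [sub_mul]
  have hA1 : μ.real A ≤ 1 := measureReal_le_one
  nlinarith [mul_nonneg (sub_nonneg.2 hM1) (sub_nonneg.2 hA1)]

end ProbabilityTheory.Kernel.IsReversible

attribute [local instance] Framework.isProb Framework.isMarkov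

namespace Framework

variable (F : Framework E) {lam s : ℝ}

lemma isReversible (hs : 0 ≤ s) : (F.κ s).IsReversible F.μ := by
  intro A B hA hB
  have h := F.reversible s hs A B hA hB
  rw [integral_toReal ((F.κ s).measurable_coe hB).aemeasurable
      (ae_of_all _ fun _ => measure_lt_top _ _),
    integral_toReal ((F.κ s).measurable_coe hA).aemeasurable
      (ae_of_all _ fun _ => measure_lt_top _ _),
    ← Measure.compProd_apply_prod hA hB, ← Measure.compProd_apply_prod hB hA] at h
  rw [← Measure.compProd_apply_prod hA hB, ← Measure.compProd_apply_prod hB hA]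
  exact (ENNReal.toReal_eq_toReal_iff' (measure_ne_top _ _) (measure_ne_top _ _)).1 h

variable {F}

lemma memLp_Pop (hgap : HasSpectralGap F lam) (hs : 0 ≤ s) {g : E → ℝ} (hg : Measurable g)
    (hg2 : MemLp g 2 F.μ) (hg0 : ∫ x, g x ∂F.μ = 0) : MemLp (Pop F.κ s g) 2 F.μ :=
  ⟨hg.stronglyMeasurable.integral_kernel.aestronglyMeasurable,
    (hgap g hg2 hg0 s hs).trans_lt (ENNReal.mul_lt_top ENNReal.ofReal_lt_top hg2.2)⟩

lemma integral_abs_Pop_le (hgap : HasSpectralGap F lam) (hs : 0 ≤ s) {g : E → ℝ}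
    (hg : Measurable g) (hg2 : MemLp g 2 F.μ) (hg0 : ∫ x, g x ∂F.μ = 0) :
    ∫ x, |Pop F.κ s g x| ∂F.μ ≤ exp (-lam * s) * √(∫ x, g x ^ 2 ∂F.μ) := by
  have hPg := memLp_Pop hgap hs hg hg2 hg0
  rw [← ENNReal.ofReal_le_ofReal_iff (by positivity)]
  calc ENNReal.ofReal (∫ x, |Pop F.κ s g x| ∂F.μ) = eLpNorm (Pop F.κ s g) 1 F.μ := by
        rw [eLpNorm_one_eq_lintegral_enorm,
          ← ofReal_integral_norm_eq_lintegral_enorm (hPg.integrable one_le_two)]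
        rfl
    _ ≤ eLpNorm (Pop F.κ s g) 2 F.μ := eLpNorm_le_eLpNorm_of_exponent_le one_le_two hPg.1
    _ ≤ ENNReal.ofReal (exp (-lam * s)) * eLpNorm g 2 F.μ := hgap g hg2 hg0 s hs
    _ = ENNReal.ofReal (exp (-lam * s) * √(∫ x, g x ^ 2 ∂F.μ)) := by
        rw [eLpNorm_two_eq_ofReal_sqrt_integral_sq hg2, ENNReal.ofReal_mul (exp_pos _).le]

/-- The `√K` comes from the Bhatia–Davis bound `Var M ≤ (K - ∫ M) ∫ M ≤ K`. -/
lemma neg_setIntegral_Pop_sub_integral_le (hgap : HasSpectralGap F lam) (hs : 0 ≤ s)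
    {M : E → ℝ} (hM : Measurable M) (hM0 : 0 ≤ M) {K : ℝ} (hMK : ∀ a, M a ≤ K)
    (hM1 : ∫ a, M a ∂F.μ ≤ 1) {A : Set E} (hA : MeasurableSet A) :
    -∫ x in A, Pop F.κ s (fun a => M a - ∫ b, M b ∂F.μ) x ∂F.μ ≤ exp (-lam * s) * √K / 2 := by
  set c := ∫ b, M b ∂F.μ
  have hMIcc : ∀ᵐ a ∂F.μ, M a ∈ Set.Icc 0 K := ae_of_all _ fun a => ⟨hM0 a, hMK a⟩
  have hM2 : MemLp M 2 F.μ := memLp_of_bounded hMIcc hM.aestronglyMeasurable 2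
  have hg2 : MemLp (fun a => M a - c) 2 F.μ := hM2.sub (memLp_const c)
  have hg0 : ∫ a, (M a - c) ∂F.μ = 0 := by
    rw [integral_sub (hM2.integrable one_le_two) (integrable_const c)]
    simp [c]
  have hc0 : 0 ≤ c := integral_nonneg hM0
  have hcK : c ≤ K := by
    simpa using integral_mono (hM2.integrable one_le_two) (integrable_const K) hMK
  have hvar : ∫ a, (M a - c) ^ 2 ∂F.μ ≤ K := by
    rw [← variance_eq_integral hM.aemeasurable]
    nlinarith [variance_le_sub_mul_sub hMIcc hM.aemeasurable]
  have hgb a : |M a - c| ≤ K + |c| :=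
    (abs_sub _ _).trans (by rw [abs_of_nonneg (hM0 a)]; linarith [hMK a])
  have hmean : ∫ x, Pop F.κ s (fun a => M a - c) x ∂F.μ = 0 := by
    simpa [Pop, hg0] using (F.isReversible hs).integral_integral_mul_comm (hM.sub_const c)
      measurable_const hgb fun _ => (abs_one (α := ℝ)).le
  have hPg := (memLp_Pop hgap hs (hM.sub_const c) hg2 hg0).integrable one_le_two
  calc -∫ x in A, Pop F.κ s (fun a => M a - c) x ∂F.μ
      ≤ (∫ x, |Pop F.κ s (fun a => M a - c) x| ∂F.μ) / 2 :=
        neg_setIntegral_le_half_integral_abs hPg hmean hA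
    _ ≤ exp (-lam * s) * √(∫ a, (M a - c) ^ 2 ∂F.μ) / 2 := by
        gcongr
        exact integral_abs_Pop_le hgap hs (hM.sub_const c) hg2 hg0
    _ ≤ exp (-lam * s) * √K / 2 := by gcongr

lemma measureReal_sub_comp_withDensity_le (hgap : HasSpectralGap F lam) (hs : 0 ≤ s)
    {m : E → ℝ} (hm : Measurable m) (hm0 : 0 ≤ m) (hmi : Integrable m F.μ)
    (hm1 : ∫ a, m a ∂F.μ = 1) {K : ℝ} (hK : 0 ≤ K) {A : Set E} (hA : MeasurableSet A) :
    F.μ.real A - (F.κ s ∘ₘ F.μ.withDensity fun a => ENNReal.ofReal (m a)).real A ≤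
      (1 - ∫ a, min (m a) K ∂F.μ) + exp (-lam * s) * √K / 2 := by
  have hM : Measurable fun a => min (m a) K := hm.min measurable_const
  have hM0 : 0 ≤ fun a => min (m a) K := fun a => le_min (hm0 a) hK
  have hM1 : ∫ a, min (m a) K ∂F.μ ≤ 1 :=
    hm1 ▸ integral_mono (hmi.inf (integrable_const K)) hmi fun a => min_le_left _ _
  have hrev := (F.isReversible hs).measureReal_sub_comp_withDensity_le hm hm0 hmi hM hM0
    (fun a => min_le_left _ _) (fun a => min_le_right _ _) hM1 hA
  have hdecay := neg_setIntegral_Pop_sub_integral_le hgap hs hM hM0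
    (fun a => min_le_right _ _) hM1 hA
  simp only [Pop] at hdecay
  linarith

lemma tvDist_comp_withDensity_le (hgap : HasSpectralGap F lam) (hlam : 0 < lam) {ε : ℝ}
    (hε : 0 < ε) {m f : E → ℝ} (hm : Measurable m) (hm0 : 0 ≤ m) (hmf : m ≤ f)
    [IsProbabilityMeasure (F.μ.withDensity fun a => ENNReal.ofReal (m a))]
    (hf : Integrable (fun a => f a * log (f a)) F.μ)
    (hs : 1 + ∫ a, f a * log (f a) ∂F.μ ≤ lam * s * ε) :
    tvDist (F.κ s ∘ₘ F.μ.withDensity fun a => ENNReal.ofReal (m a)) F.μ ≤ ε := by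
  have hEnt := neg_inv_exp_one_le_integral_mul_log (fun a => (hm0 a).trans (hmf a)) hf
  have he := two_mul_inv_exp_one_lt_one
  have hs0 : 0 ≤ s := by
    by_contra! h
    linarith [mul_neg_of_pos_of_neg (mul_pos hlam hε) h, inv_pos.2 (exp_pos 1)]
  have hm1 : ∫ a, m a ∂F.μ = 1 := by
    rw [integral_eq_lintegral_of_nonneg_ae (ae_of_all _ hm0) hm.aestronglyMeasurable,
      ← setLIntegral_univ, ← withDensity_apply _ MeasurableSet.univ, measure_univ,
      ENNReal.toReal_one]
  have hmi : Integrable m F.μ := Integrable.of_integral_ne_zero (by rw [hm1]; exact one_ne_zero)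
  set r := ε * exp (lam * s)
  have hlogr : ε * log r = ε * log ε + lam * s * ε := by
    rw [log_mul hε.ne' (exp_pos _).ne', log_exp]
    ring
  have hlogr_pos : 0 < log r := by
    nlinarith [neg_inv_exp_one_le_mul_log hε.le]
  have htail := integral_sub_integral_min_mul_log_le hmi hm0 hmf hf
    (one_le_pow₀ (n := 2) (log_pos_iff (by positivity) |>.1 hlogr_pos).le)
  rw [hm1, log_pow, Nat.cast_ofNat] at htail
  have hmass : 1 - ∫ a, min (m a) (r ^ 2) ∂F.μ ≤ ε / 2 := by
    nlinarith [neg_inv_exp_one_le_mul_log hε.le]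
  refine tvDist_le_of_forall_measureReal_sub_le fun A hA => ?_
  have hest := measureReal_sub_comp_withDensity_le hgap hs0 hm hm0 hmi hm1 (sq_nonneg r) hA
  have hr : exp (-lam * s) * √(r ^ 2) = ε := by
    rw [sqrt_sq (by positivity), mul_left_comm, neg_mul, exp_neg, inv_mul_cancel₀ (exp_pos _).ne',
      mul_one]
  linarith

end Framework

/-- **Propagated mixing-time estimate.** For the process started at `x`, if at some
time `t > 0` the law `ν_t = κ_t(x,·)` has density `f_t` w.r.t. `μ` with finite
entropy `Ent(X_t) = ∫ f_t log f_t dμ`, then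
`t_mix(ε) ≤ t + (1 + Ent(X_t))/(λε)` for every `ε ∈ (0,1)`. -/
theorem propagated_mixing_time_estimate
    (F : Framework E) (x : E) (lam : ℝ) (hlam : 0 < lam) (hgap : HasSpectralGap F lam)
    (ε : ℝ) (hε : ε ∈ Set.Ioo (0 : ℝ) 1) (t : ℝ) (ht : 0 < t)
    (ft : E → ℝ) (hft : ∀ a, 0 ≤ ft a)
    (hdens : (F.κ t) x = F.μ.withDensity fun a => ENNReal.ofReal (ft a))
    (hint : Integrable (fun a => ft a * Real.log (ft a)) F.μ) :
    tmix F x ε ≤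
      ENNReal.ofReal (t + (1 + ∫ a, ft a * Real.log (ft a) ∂F.μ) / (lam * ε)) := by
  set s := (1 + ∫ a, ft a * log (ft a) ∂F.μ) / (lam * ε)
  have : IsFiniteMeasure (F.μ.withDensity fun a => ENNReal.ofReal (ft a)) := hdens ▸ inferInstance
  obtain ⟨m, hm, hm0, hmf, hmft⟩ := exists_measurable_le_withDensity_ofReal_eq F.μ hft
  rw [← hmft] at hdens
  have : IsProbabilityMeasure (F.μ.withDensity fun a => ENNReal.ofReal (m a)) :=
    hdens ▸ inferInstance
  have hs : 0 < s := div_pos (by linarith [neg_inv_exp_one_le_integral_mul_log hft hint,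
    two_mul_inv_exp_one_lt_one, inv_pos.2 (exp_pos 1)]) (mul_pos hlam hε.1)
  refine iInf₂_le_of_le (t + s) ⟨by positivity, ?_⟩ le_rfl
  rw [F.semigroup t s ht.le hs.le, Kernel.comp_apply, hdens]
  exact F.tvDist_comp_withDensity_le hgap hlam hε.1 hm hm0 hmf hint
    (le_of_eq (by simp only [s]; field_simp [hε.1.ne']))
end
end

section
/- (Varentropy bound on the mixing window.) Let (E, ℰ, μ, (κ_t), x) be as in the framework with spectral gap λ > 0, the process started at the point x. Let ε ∈ (0,1) and let t > 0 be such that TV(X_t) ≤ 1 − ε, the density f_t exists, and Ent(X_t) and Varent(X_t) are finite. Then t_mix(ε) ≤ t + 2/(λ ε²) + √(Varent(X_t)) / (λ ε²). -/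
open MeasureTheory ProbabilityTheory Filter Topology
open scoped ENNReal

noncomputable section

variable {E : Type*} [MeasurableSpace E]

open Real

/-!
Let `g` be a density of `ν = κ_t(x, ·)` with respect to `μ` and `L = log g`; under `ν`, `L` has
mean `Ent(X_t)` and variance `V = Varent(X_t)`. By Cantelli's inequality each of the events
`L < Ent - a` and `L > Ent + a`, with `a = √(V (2/ε - 1))`, has `ν`-probability at most `ε/2`.
The first one, together with `TV(X_t) ≤ 1 - ε`, bounds the entropy: `Ent - a ≤ log (2/ε)`.
For a measurable set `A`, `κ_{t+s}(x, A) - μ(A) = ∫ P_s(1_A - μ(A)) dν`. Split this integral at the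
density level `g = e^K` with `K = Ent + a`: below it, Cauchy–Schwarz and the spectral gap give at
most `e^{K/2 - λ s}`, which is `≤ ε/2` for `s = (2 + √V)/(λ ε²)`; above it, the tail event
contributes at most `ε/2`.
-/

section TotalVariation

variable {μ ν : Measure E}

theorem abs_measureReal_sub_le_one [IsProbabilityMeasure ν] [IsProbabilityMeasure μ]
    (A : Set E) : |ν.real A - μ.real A| ≤ 1 := by
  have hν : ν.real A ≤ 1 := measureReal_le_one
  have hμ : μ.real A ≤ 1 := measureReal_le_one
  rw [abs_le]
  constructor <;> linarith [measureReal_nonneg (μ := ν) (s := A),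
    measureReal_nonneg (μ := μ) (s := A)]

theorem abs_sub_le_tvDist [IsProbabilityMeasure ν] [IsProbabilityMeasure μ] {A : Set E}
    (hA : MeasurableSet A) : |ν.real A - μ.real A| ≤ tvDist ν μ :=
  le_ciSup (f := fun A : {A : Set E // MeasurableSet A} => |ν.real A.1 - μ.real A.1|)
    ⟨1, by rintro _ ⟨B, rfl⟩; exact abs_measureReal_sub_le_one B.1⟩ ⟨A, hA⟩

theorem tvDist_le_of_forall {c : ℝ} (h : ∀ A, MeasurableSet A → |ν.real A - μ.real A| ≤ c) :
    tvDist ν μ ≤ c :=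
  ciSup_le fun A => h A.1 A.2

end TotalVariation

section Cantelli

variable {Ω : Type*} [MeasurableSpace Ω] {P : Measure Ω} [IsProbabilityMeasure P] {X : Ω → ℝ}

/-- **Cantelli's inequality**, the one-sided Chebyshev inequality. -/
theorem measureReal_gt_add_le_variance_div (hX : MemLp X 2 P) {a : ℝ} (ha : 0 ≤ a) :
    P.real {ω | P[X] + a < X ω} ≤ Var[X; P] / (Var[X; P] + a ^ 2) := by
  set m := P[X]
  set V := Var[X; P]
  have hV : 0 ≤ V := variance_nonneg X P
  rcases ha.eq_or_lt with rfl | ha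
  · rcases hV.eq_or_lt with hV0 | hVpos
    · have hnull : P {ω | m + 0 < X ω} = 0 :=
        measure_mono_null (fun ω (hω : m + 0 < X ω) => show X ω ≠ m by linarith)
          (ae_iff.mp (ae_eq_integral_of_variance_eq_zero hX hV0.symm))
      rw [measureReal_def, hnull, ← hV0]
      simp
    · simp only [zero_pow two_ne_zero, add_zero, div_self hVpos.ne']
      exact measureReal_le_one
  -- Markov's inequality for `(X - m + u)²`, with the optimal shift `u = V / a`.
  set u := V / a
  have hu : 0 ≤ u := div_nonneg hV ha.le
  have hY : MemLp (fun ω => X ω - m + u) 2 P := (hX.sub (memLp_const m)).add (memLp_const u)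
  have hmeanY : ∫ ω, (X ω - m + u) ∂P = u := by
    have hXi := hX.integrable one_le_two
    have hXm : Integrable (fun ω => X ω - m) P := hXi.sub (integrable_const m)
    rw [integral_add hXm (integrable_const u), integral_sub hXi (integrable_const m)]
    simp [m]
  have hsqY : ∫ ω, (X ω - m + u) ^ 2 ∂P = V + u ^ 2 := by
    have h := variance_eq_sub hY
    rw [variance_add_const (X := fun ω => X ω - m) (hX.1.sub aestronglyMeasurable_const) u,
      variance_sub_const hX.1 m, hmeanY] at h
    simp only [Pi.pow_apply] at h
    linarith
  have hsub : {ω | m + a < X ω} ⊆ {ω | (a + u) ^ 2 ≤ (X ω - m + u) ^ 2} :=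
    fun ω (hω : m + a < X ω) =>
      show (a + u) ^ 2 ≤ (X ω - m + u) ^ 2 from pow_le_pow_left₀ (by positivity) (by linarith) 2
  have hmarkov := mul_meas_ge_le_integral_of_nonneg (f := fun ω => (X ω - m + u) ^ 2)
    (Eventually.of_forall fun ω => sq_nonneg _) hY.integrable_sq ((a + u) ^ 2)
  calc P.real {ω | m + a < X ω} ≤ P.real {ω | (a + u) ^ 2 ≤ (X ω - m + u) ^ 2} :=
        measureReal_mono hsub
    _ ≤ (V + u ^ 2) / (a + u) ^ 2 := by
      rw [le_div_iff₀ (by positivity), ← hsqY, mul_comm]; exact hmarkov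
    _ = V / (V + a ^ 2) := by simp only [u]; field_simp; ring

theorem measureReal_gt_add_sqrt_le (hX : MemLp X 2 P) {c : ℝ} (hc : 0 ≤ c) :
    P.real {ω | P[X] + √(Var[X; P] * c) < X ω} ≤ 1 / (1 + c) := by
  refine (measureReal_gt_add_le_variance_div hX (sqrt_nonneg _)).trans ?_
  rw [sq_sqrt (mul_nonneg (variance_nonneg X P) hc)]
  rcases (variance_nonneg X P).eq_or_lt with hV | hV
  · rw [← hV, zero_mul, add_zero, div_zero]
    positivity
  · exact (div_le_div_iff₀ (by positivity) (by positivity)).mpr (le_of_eq (by ring))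

theorem measureReal_lt_sub_sqrt_le (hX : MemLp X 2 P) {c : ℝ} (hc : 0 ≤ c) :
    P.real {ω | X ω < P[X] - √(Var[X; P] * c)} ≤ 1 / (1 + c) := by
  have h := measureReal_gt_add_sqrt_le hX.neg hc
  simp only [Pi.neg_apply, integral_neg, variance_neg] at h
  convert h using 3
  ext ω
  constructor <;> intro <;> linarith

end Cantelli

theorem eq_zero_or_eq_one_of_mul_log_eq_zero {x : ℝ} (hx : 0 ≤ x) (h : x * log x = 0) :
    x = 0 ∨ x = 1 := by
  rcases mul_eq_zero.mp h with h | h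
  · exact Or.inl h
  · rcases log_eq_zero.mp h with h | h | h
    · exact Or.inl h
    · exact Or.inr h
    · linarith

section DensityTransfer

variable {μ : Measure E}

theorem ae_restrict_eq_of_withDensity_eq [SigmaFinite μ] {f g : E → ℝ≥0∞} {s : Set E}
    (hs : MeasurableSet s) (hf : AEMeasurable f (μ.restrict s)) (hg : AEMeasurable g (μ.restrict s))
    (h : μ.withDensity f = μ.withDensity g) : f =ᵐ[μ.restrict s] g := by
  rw [← withDensity_eq_iff_of_sigmaFinite hf hg, ← restrict_withDensity hs,
    ← restrict_withDensity hs, h]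

theorem ae_eq_zero_or_one_of_withDensity_eq [IsFiniteMeasure μ] {f g : E → ℝ≥0∞} (hg : Measurable g)
    (hf : ∀ᵐ a ∂μ, f a = 0 ∨ f a = 1) (h : μ.withDensity f = μ.withDensity g) :
    ∀ᵐ a ∂μ, g a = 0 ∨ g a = 1 := by
  have hset : ∀ s, MeasurableSet s → ∫⁻ a in s, f a ∂μ = ∫⁻ a in s, g a ∂μ := fun s hs => by
    rw [← withDensity_apply _ hs, h, withDensity_apply _ hs]
  have hf_le : ∀ᵐ a ∂μ, f a ≤ 1 := hf.mono fun a ha => by rcases ha with ha | ha <;> simp [ha]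
  have hg_le : ∀ᵐ a ∂μ, g a ≤ 1 :=
    ae_le_of_forall_setLIntegral_le_of_sigmaFinite hg fun s hs _ =>
      (hset s hs).symm.trans_le (lintegral_mono_ae (ae_restrict_of_ae hf_le))
  set B := {a | g a < 1}
  have hB : MeasurableSet B := measurableSet_lt hg measurable_const
  -- A measurable minorant `φ` of `f` on `B` lives where `f = 1 > g`, which forces it to vanish.
  obtain ⟨φ, hφ, hφf, hfφ⟩ := exists_measurable_le_lintegral_eq (μ := μ.restrict B) f
  set C := B ∩ {a | φ a ≠ 0}
  have hC : MeasurableSet C := hB.inter (hφ (measurableSet_singleton 0)).compl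
  have hμC : μ C = 0 := by
    by_contra hC0
    have hf_one : ∀ᵐ a ∂μ.restrict C, 1 ≤ f a := by
      filter_upwards [ae_restrict_of_ae hf, ae_restrict_mem hC] with a ha haC
      rcases ha with ha | ha
      · exact absurd (le_antisymm ((hφf a).trans ha.le) bot_le) haC.2
      · exact ha.ge
    have hgC : ∫⁻ a in C, g a ∂μ ≤ μ C :=
      (lintegral_mono_ae (ae_restrict_of_ae hg_le)).trans_eq (setLIntegral_one C)
    have hlt := setLIntegral_strict_mono hC hC0 measurable_const
      (ne_top_of_le_ne_top (measure_ne_top μ C) hgC) (Eventually.of_forall fun a ha => ha.1)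
    rw [← hset C hC] at hlt
    exact hlt.not_ge (lintegral_mono_ae hf_one)
  have hgB : ∫⁻ a in B, g a ∂μ = 0 := by
    rw [← hset B hB, hfφ, lintegral_eq_zero_iff hφ, EventuallyEq, ae_restrict_iff' hB]
    exact ae_iff.mpr (measure_mono_null (fun a ha => Classical.not_imp.mp ha) hμC)
  rw [lintegral_eq_zero_iff hg, EventuallyEq, ae_restrict_iff' hB] at hgB
  filter_upwards [hg_le, hgB] with a h1 h2
  by_cases ha : g a < 1
  · exact Or.inl (h2 ha)
  · exact Or.inr (le_antisymm h1 (not_lt.mp ha))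

/-- The entropy integrands `f log f` and `f log² f` determine `f` wherever `f log f ≠ 0`
(as `f = exp (f log² f / f log f)`), and force `f ∈ {0, 1}` elsewhere. -/
theorem comp_ae_eq_of_withDensity_ofReal_eq [IsFiniteMeasure μ] (Φ : ℝ → ℝ) (hΦ0 : Φ 0 = 0)
    (hΦ1 : Φ 1 = 0) {f g : E → ℝ} (hf : ∀ a, 0 ≤ f a) (hg0 : ∀ a, 0 ≤ g a) (hg : Measurable g)
    (hent : AEStronglyMeasurable (fun a => f a * log (f a)) μ)
    (hvarent : AEStronglyMeasurable (fun a => f a * log (f a) ^ 2) μ)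
    (h : μ.withDensity (fun a => ENNReal.ofReal (f a)) =
      μ.withDensity (fun a => ENNReal.ofReal (g a))) :
    (fun a => Φ (g a)) =ᵐ[μ] fun a => Φ (f a) := by
  set S := {a | hent.mk _ a = 0}
  have hS : MeasurableSet S := hent.stronglyMeasurable_mk.measurable (measurableSet_singleton 0)
  refine ae_of_ae_restrict_of_ae_restrict_compl S ?_ ?_
  · have hf01 : ∀ᵐ a ∂μ.restrict S, ENNReal.ofReal (f a) = 0 ∨ ENNReal.ofReal (f a) = 1 := by
      filter_upwards [ae_restrict_of_ae hent.ae_eq_mk, ae_restrict_mem hS] with a ha haS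
      rcases eq_zero_or_eq_one_of_mul_log_eq_zero (hf a) (ha.trans haS) with h | h <;> simp [h]
    have hg01 := ae_eq_zero_or_one_of_withDensity_eq hg.ennreal_ofReal hf01
      (by rw [← restrict_withDensity hS, h, restrict_withDensity hS])
    have hΦ : ∀ x : ℝ, 0 ≤ x → (ENNReal.ofReal x = 0 ∨ ENNReal.ofReal x = 1) → Φ x = 0 := by
      rintro x hx (h | h)
      · rw [le_antisymm (ENNReal.ofReal_eq_zero.mp h) hx, hΦ0]
      · rw [ENNReal.ofReal_eq_one.mp h, hΦ1]
    filter_upwards [hf01, hg01] with a hfa hga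
    rw [hΦ _ (hg0 a) hga, hΦ _ (hf a) hfa]
  · have hexp : f =ᵐ[μ.restrict Sᶜ] fun a => exp (hvarent.mk _ a / hent.mk _ a) := by
      filter_upwards [ae_restrict_of_ae hent.ae_eq_mk, ae_restrict_of_ae hvarent.ae_eq_mk,
        ae_restrict_mem hS.compl] with a h1 h2 haS
      obtain ⟨hf0, hlog0⟩ := mul_ne_zero_iff.mp (h1.trans_ne haS)
      rw [← h1, ← h2, show f a * log (f a) ^ 2 / (f a * log (f a)) = log (f a) by field_simp,
        exp_log ((hf a).lt_of_ne' hf0)]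
    have hf_meas : AEMeasurable (fun a => ENNReal.ofReal (f a)) (μ.restrict Sᶜ) :=
      (measurable_exp.comp (hvarent.stronglyMeasurable_mk.measurable.div
        hent.stronglyMeasurable_mk.measurable)).ennreal_ofReal.aemeasurable.congr
        (hexp.fun_comp ENNReal.ofReal).symm
    filter_upwards [ae_restrict_eq_of_withDensity_eq hS.compl hf_meas
      hg.ennreal_ofReal.aemeasurable h] with a ha
    rw [← ENNReal.toReal_ofReal (hf a), ha, ENNReal.toReal_ofReal (hg0 a)]

end DensityTransfer

section Density

variable {μ ν : Measure E} {g : E → ℝ}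

theorem integral_withDensity_ofReal (hg : Measurable g) (hg0 : ∀ a, 0 ≤ g a) (φ : E → ℝ) :
    ∫ a, φ a ∂μ.withDensity (fun a => ENNReal.ofReal (g a)) = ∫ a, g a * φ a ∂μ := by
  rw [integral_withDensity_eq_integral_toReal_smul hg.ennreal_ofReal
    (Eventually.of_forall fun _ => ENNReal.ofReal_lt_top)]
  simp [ENNReal.toReal_ofReal (hg0 _)]

theorem integrable_withDensity_ofReal_iff (hg : Measurable g) (hg0 : ∀ a, 0 ≤ g a)
    {φ : E → ℝ} : Integrable φ (μ.withDensity fun a => ENNReal.ofReal (g a)) ↔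
      Integrable (fun a => g a * φ a) μ := by
  rw [integrable_withDensity_iff_integrable_smul' hg.ennreal_ofReal
    (Eventually.of_forall fun _ => ENNReal.ofReal_lt_top)]
  simp [ENNReal.toReal_ofReal (hg0 _)]

theorem memLp_two_withDensity_ofReal (hg : Measurable g) (hg0 : ∀ a, 0 ≤ g a)
    {φ : E → ℝ} (hφ : Measurable φ) (h2 : Integrable (fun a => g a * φ a ^ 2) μ) :
    MemLp φ 2 (μ.withDensity fun a => ENNReal.ofReal (g a)) :=
  (memLp_two_iff_integrable_sq hφ.aestronglyMeasurable).mpr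
    ((integrable_withDensity_ofReal_iff hg hg0).mpr h2)

theorem variance_withDensity_ofReal (hg : Measurable g) (hg0 : ∀ a, 0 ≤ g a)
    [IsProbabilityMeasure (μ.withDensity fun a => ENNReal.ofReal (g a))]
    {φ : E → ℝ} (hφ : Measurable φ) (h2 : Integrable (fun a => g a * φ a ^ 2) μ) :
    Var[φ; μ.withDensity fun a => ENNReal.ofReal (g a)] =
      ∫ a, g a * φ a ^ 2 ∂μ - (∫ a, g a * φ a ∂μ) ^ 2 := by
  rw [variance_eq_sub (memLp_two_withDensity_ofReal hg hg0 hφ h2),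
    integral_withDensity_ofReal hg hg0, integral_withDensity_ofReal hg hg0]
  rfl

theorem integral_density_eq_one (hg : Measurable g) (hg0 : ∀ a, 0 ≤ g a)
    [IsProbabilityMeasure (μ.withDensity fun a => ENNReal.ofReal (g a))] :
    ∫ a, g a ∂μ = 1 := by
  simpa using (integral_withDensity_ofReal (μ := μ) hg hg0 fun _ => 1).symm

theorem enorm_integral_mul_le_eLpNorm_mul_eLpNorm {φ η : E → ℝ} (hη : AEStronglyMeasurable η μ)
    (hφ : AEStronglyMeasurable φ μ) :
    ‖∫ a, φ a * η a ∂μ‖ₑ ≤ eLpNorm φ 2 μ * eLpNorm η 2 μ := by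
  have h := eLpNorm_smul_le_mul_eLpNorm (p := 2) (q := 2) (r := 1) hη hφ
  rw [eLpNorm_one_eq_lintegral_enorm] at h
  exact (enorm_integral_le_lintegral_enorm _).trans h

theorem eLpNorm_two_le_of_sq_le_mul_density (hg : Measurable g)
    [IsProbabilityMeasure (μ.withDensity fun a => ENNReal.ofReal (g a))] {φ : E → ℝ} {C : ℝ}
    (hC : 0 ≤ C) (hφ : ∀ a, φ a ^ 2 ≤ C * g a) : eLpNorm φ 2 μ ≤ ENNReal.ofReal √C := by
  have hsq : eLpNorm φ 2 μ ^ 2 ≤ ENNReal.ofReal √C ^ 2 := by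
    have h := eLpNorm_nnreal_pow_eq_lintegral (μ := μ) (f := φ) (p := 2) two_ne_zero
    simp only [NNReal.coe_ofNat, ENNReal.coe_ofNat, ENNReal.rpow_two] at h
    rw [h, ← ENNReal.ofReal_pow (sqrt_nonneg C), sq_sqrt hC]
    calc ∫⁻ a, ‖φ a‖ₑ ^ 2 ∂μ ≤ ∫⁻ a, ENNReal.ofReal C * ENNReal.ofReal (g a) ∂μ := by
          refine lintegral_mono fun a => ?_
          rw [← ENNReal.ofReal_mul hC, Real.enorm_eq_ofReal_abs,
            ← ENNReal.ofReal_pow (abs_nonneg _), sq_abs]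
          exact ENNReal.ofReal_le_ofReal (hφ a)
      _ = ENNReal.ofReal C := by
          rw [lintegral_const_mul _ hg.ennreal_ofReal, ← setLIntegral_univ,
            ← withDensity_apply _ MeasurableSet.univ, measure_univ, mul_one]
  exact (ENNReal.pow_le_pow_left_iff two_ne_zero).mp hsq

/-- The set `{g ≥ e^θ}` has `μ`-mass at most `e^{-θ}` but `ν`-mass at least `1 - ε/2`. -/
theorem le_log_two_div_of_tvDist_le [IsProbabilityMeasure μ] [IsProbabilityMeasure ν]
    (hg : Measurable g) (hg0 : ∀ a, 0 ≤ g a)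
    (hν : ν = μ.withDensity fun a => ENNReal.ofReal (g a)) {ε θ : ℝ} (hε : 0 < ε)
    (htv : tvDist ν μ ≤ 1 - ε) (htail : ν.real {a | log (g a) < θ} ≤ ε / 2) :
    θ ≤ log (2 / ε) := by
  set A := {a | exp θ ≤ g a}
  have hA : MeasurableSet A := measurableSet_le measurable_const hg
  have hμA : exp θ * μ.real A ≤ 1 := by
    subst hν
    have hint := integral_density_eq_one (μ := μ) hg hg0
    exact (mul_meas_ge_le_integral_of_nonneg (Eventually.of_forall hg0)
      (Integrable.of_integral_ne_zero (hint ▸ one_ne_zero)) _).trans_eq hint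
  have hpos : ∀ᵐ a ∂ν, 0 < g a := by
    rw [hν, ae_withDensity_iff hg.ennreal_ofReal]
    exact Eventually.of_forall fun a ha => ENNReal.ofReal_pos.mp (pos_iff_ne_zero.mpr ha)
  have hνAc : ν.real Aᶜ ≤ ε / 2 := by
    refine le_trans (ENNReal.toReal_mono (measure_ne_top _ _) (measure_mono_ae ?_)) htail
    filter_upwards [hpos] with a ha hAc
    exact (log_lt_iff_lt_exp ha).mpr (not_le.mp hAc)
  have hνA : ν.real A - μ.real A ≤ 1 - ε :=
    (le_abs_self _).trans ((abs_sub_le_tvDist hA).trans htv)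
  have hμA' : ε / 2 ≤ μ.real A := by
    rw [measureReal_compl hA, probReal_univ] at hνAc
    linarith
  rw [le_log_iff_exp_le (by positivity), le_div_iff₀ hε]
  nlinarith [exp_pos θ]

/-- Cauchy–Schwarz below the density level `e^K`, the trivial bound above it. -/
theorem abs_integral_le_exp_mul_eLpNorm_add [IsFiniteMeasure μ] [IsProbabilityMeasure ν]
    (hg : Measurable g) (hg0 : ∀ a, 0 ≤ g a)
    (hν : ν = μ.withDensity fun a => ENNReal.ofReal (g a)) {η : E → ℝ} (hη : Measurable η)
    (hη1 : ∀ a, |η a| ≤ 1) (K : ℝ) :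
    |∫ a, η a ∂ν| ≤ exp (K / 2) * (eLpNorm η 2 μ).toReal + ν.real {a | exp K < g a} := by
  set S := {a | exp K < g a}
  have hS : MeasurableSet S := measurableSet_lt measurable_const hg
  have hην : Integrable η ν := (integrable_const (1 : ℝ)).mono' hη.aestronglyMeasurable
    (Eventually.of_forall hη1)
  rw [← integral_add_compl hS hην, add_comm]
  refine (abs_add_le _ _).trans (add_le_add ?_ ?_)
  · have hφ : eLpNorm (Sᶜ.indicator g) 2 μ ≤ ENNReal.ofReal (exp (K / 2)) := by
      rw [exp_half]
      subst hν
      refine eLpNorm_two_le_of_sq_le_mul_density hg (exp_pos K).le fun a => ?_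
      by_cases ha : a ∈ S
      · simp [ha, mul_nonneg (exp_pos K).le (hg0 a)]
      · rw [Set.indicator_of_mem (Set.mem_compl ha), sq]
        exact mul_le_mul_of_nonneg_right (not_lt.mp ha) (hg0 a)
    have hηL2 : eLpNorm η 2 μ ≠ ⊤ := (MemLp.of_bound hη.aestronglyMeasurable 1
      (Eventually.of_forall fun a => (Real.norm_eq_abs _).trans_le (hη1 a))).eLpNorm_ne_top
    have hCS := enorm_integral_mul_le_eLpNorm_mul_eLpNorm hη.aestronglyMeasurable
      (hg.indicator hS.compl).aestronglyMeasurable (μ := μ)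
    rw [← integral_indicator hS.compl, hν, integral_withDensity_ofReal hg hg0]
    simp only [← Set.indicator_mul_right, Set.indicator_mul_left] at hCS ⊢
    calc |∫ a, Sᶜ.indicator g a * η a ∂μ| = ‖∫ a, Sᶜ.indicator g a * η a ∂μ‖ₑ.toReal := by
          rw [toReal_enorm, Real.norm_eq_abs]
      _ ≤ (eLpNorm (Sᶜ.indicator g) 2 μ * eLpNorm η 2 μ).toReal :=
          ENNReal.toReal_mono (ENNReal.mul_ne_top (ne_top_of_le_ne_top ENNReal.ofReal_ne_top hφ)
            hηL2) hCS
      _ ≤ exp (K / 2) * (eLpNorm η 2 μ).toReal := by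
          rw [ENNReal.toReal_mul]
          gcongr
          exact ENNReal.toReal_le_of_le_ofReal (exp_pos _).le hφ
  · simpa using norm_setIntegral_le_of_norm_le_const (f := η) (measure_lt_top ν S)
      fun a _ => (Real.norm_eq_abs _).trans_le (hη1 a)

theorem exists_measurable_density [SigmaFinite ν] [SigmaFinite μ] (h : ν ≪ μ) :
    ∃ g : E → ℝ, Measurable g ∧ (∀ a, 0 ≤ g a) ∧
      ν = μ.withDensity fun a => ENNReal.ofReal (g a) := by
  refine ⟨fun a => (ν.rnDeriv μ a).toReal, (Measure.measurable_rnDeriv ν μ).ennreal_toReal,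
    fun a => ENNReal.toReal_nonneg, ?_⟩
  conv_lhs => rw [← Measure.withDensity_rnDeriv_eq ν μ h]
  refine withDensity_congr_ae ?_
  filter_upwards [Measure.rnDeriv_lt_top ν μ] with a ha
  exact (ENNReal.ofReal_toReal ha.ne).symm

/-- The density `f` need not be measurable; `g` is a measurable version of it. -/
theorem log_density_moments [IsFiniteMeasure μ] [IsProbabilityMeasure ν] {f : E → ℝ}
    (hg : Measurable g) (hg0 : ∀ a, 0 ≤ g a)
    (hν : ν = μ.withDensity fun a => ENNReal.ofReal (g a)) (hf : ∀ a, 0 ≤ f a)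
    (hνf : ν = μ.withDensity fun a => ENNReal.ofReal (f a))
    (hent : Integrable (fun a => f a * log (f a)) μ)
    (hvarent : Integrable (fun a => f a * log (f a) ^ 2) μ) :
    MemLp (fun a => log (g a)) 2 ν ∧ ν[fun a => log (g a)] = ∫ a, f a * log (f a) ∂μ ∧
      Var[fun a => log (g a); ν] =
        ∫ a, f a * log (f a) ^ 2 ∂μ - (∫ a, f a * log (f a) ∂μ) ^ 2 := by
  subst hν
  have htransfer (Φ : ℝ → ℝ) (hΦ0 : Φ 0 = 0) (hΦ1 : Φ 1 = 0) :=
    comp_ae_eq_of_withDensity_ofReal_eq Φ hΦ0 hΦ1 hf hg0 hg hent.1 hvarent.1 hνf.symm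
  have h1 := htransfer (fun u => u * log u) (by simp) (by simp)
  have h2 := htransfer (fun u => u * log u ^ 2) (by simp) (by simp)
  have hlog : Measurable fun a => log (g a) := measurable_log.comp hg
  refine ⟨memLp_two_withDensity_ofReal hg hg0 hlog (hvarent.congr h2.symm), ?_, ?_⟩
  · rw [integral_withDensity_ofReal hg hg0]
    exact integral_congr_ae h1
  · rw [variance_withDensity_ofReal hg hg0 hlog (hvarent.congr h2.symm), integral_congr_ae h1,
      integral_congr_ae h2]

end Density

theorem integral_indicator_one_sub_const {P : Measure E} [IsProbabilityMeasure P] {A : Set E}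
    (hA : MeasurableSet A) (c : ℝ) : ∫ y, (A.indicator 1 y - c) ∂P = P.real A - c := by
  have hind : Integrable (A.indicator (1 : E → ℝ)) P := (integrable_const (1 : ℝ)).indicator hA
  rw [integral_sub hind (integrable_const c), integral_indicator_one hA, integral_const]
  simp

namespace Framework

variable (F : Framework E)

theorem kernel_add_apply {s t : ℝ} (hs : 0 ≤ s) (ht : 0 ≤ t) (x : E) {A : Set E}
    (hA : MeasurableSet A) : (F.κ (s + t) x A).toReal = ∫ y, (F.κ t y A).toReal ∂F.κ s x := by
  have := F.isMarkov t
  rw [F.semigroup s t hs ht, Kernel.comp_apply, Measure.bind_apply hA (Kernel.aemeasurable _),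
    integral_toReal (Kernel.measurable_coe _ hA).aemeasurable
      (Eventually.of_forall fun y => measure_lt_top _ _)]

/-- The spectral gap applied to the centred indicator `1_A - μ(A)`. -/
theorem eLpNorm_kernel_apply_sub_le {lam : ℝ} (hgap : HasSpectralGap F lam) {h : ℝ}
    (hh : 0 ≤ h) {A : Set E} (hA : MeasurableSet A) :
    eLpNorm (fun y => (F.κ h y A).toReal - F.μ.real A) 2 F.μ ≤
      ENNReal.ofReal (exp (-lam * h)) := by
  have := F.isProb
  have := F.isMarkov h
  set f := fun y => A.indicator 1 y - F.μ.real A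
  have hf1 : ∀ y, ‖f y‖ ≤ 1 := fun y => by
    have := measureReal_le_one (μ := F.μ) (s := A)
    have := measureReal_nonneg (μ := F.μ) (s := A)
    rw [Real.norm_eq_abs, abs_le]
    by_cases hy : y ∈ A <;> simp only [f, hy, Set.indicator_of_mem, Set.indicator_of_notMem,
      Pi.one_apply, not_false_eq_true] <;> constructor <;> linarith
  have hf : MemLp f 2 F.μ := MemLp.of_bound
    ((measurable_const.indicator hA).sub measurable_const).aestronglyMeasurable 1
    (Eventually.of_forall hf1)
  have hPf : Pop F.κ h f = fun y => (F.κ h y A).toReal - F.μ.real A := by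
    ext y
    exact integral_indicator_one_sub_const hA _
  have hf0 : ∫ y, f y ∂F.μ = 0 := (integral_indicator_one_sub_const hA _).trans (sub_self _)
  calc _ = eLpNorm (Pop F.κ h f) 2 F.μ := by rw [hPf]
    _ ≤ ENNReal.ofReal (exp (-lam * h)) * eLpNorm f 2 F.μ := hgap f hf hf0 h hh
    _ ≤ ENNReal.ofReal (exp (-lam * h)) := by
      refine mul_le_of_le_one_right zero_le ((eLpNorm_le_of_ae_bound
        (Eventually.of_forall hf1)).trans ?_)
      simp

theorem abs_kernel_add_apply_sub_le {lam : ℝ} (hgap : HasSpectralGap F lam) {t h : ℝ}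
    (ht : 0 ≤ t) (hh : 0 ≤ h) {x : E} {g : E → ℝ} (hg : Measurable g) (hg0 : ∀ a, 0 ≤ g a)
    (hν : F.κ t x = F.μ.withDensity fun a => ENNReal.ofReal (g a)) (K : ℝ) {A : Set E}
    (hA : MeasurableSet A) :
    |(F.κ (t + h) x A).toReal - F.μ.real A| ≤
      exp (K / 2) * exp (-lam * h) + (F.κ t x).real {a | exp K < g a} := by
  have := F.isProb
  have := F.isMarkov t
  have := F.isMarkov h
  set η := fun y => (F.κ h y A).toReal - F.μ.real A
  have hη : Measurable η := (Kernel.measurable_coe _ hA).ennreal_toReal.sub measurable_const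
  have hη1 : ∀ y, |η y| ≤ 1 := fun y => abs_measureReal_sub_le_one A
  have hην : (F.κ (t + h) x A).toReal - F.μ.real A = ∫ y, η y ∂F.κ t x := by
    have hint : Integrable (fun y => (F.κ h y A).toReal) (F.κ t x) :=
      .of_bound (Kernel.measurable_coe _ hA).ennreal_toReal.aestronglyMeasurable 1
        (Eventually.of_forall fun y => by
          rw [Real.norm_of_nonneg ENNReal.toReal_nonneg]; exact measureReal_le_one)
    rw [F.kernel_add_apply ht hh x hA, integral_sub hint (integrable_const _), integral_const]
    simp
  rw [hην]
  refine (abs_integral_le_exp_mul_eLpNorm_add hg hg0 hν hη hη1 K).trans ?_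
  gcongr
  exact ENNReal.toReal_le_of_le_ofReal (exp_pos _).le (F.eLpNorm_kernel_apply_sub_le hgap hh hA)

theorem tmix_le {x : E} {ε t : ℝ} (ht : 0 < t) (h : tvDist (F.κ t x) F.μ ≤ ε) :
    tmix F x ε ≤ ENNReal.ofReal t :=
  iInf₂_le t ⟨ht, h⟩

end Framework

theorem sqrt_two_div_sub_one_le {ε : ℝ} (hε0 : 0 < ε) (hε1 : ε ≤ 1) :
    √(2 / ε - 1) ≤ 1 / ε ^ 2 := by
  rw [sqrt_le_iff, div_pow, one_pow, ← pow_mul]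
  refine ⟨by positivity, ?_⟩
  rw [div_sub_one hε0.ne', div_le_div_iff₀ hε0 (by positivity)]
  have h1 : ε * (2 - ε) ≤ 1 := by nlinarith [sq_nonneg (1 - ε)]
  have h2 : ε * (2 - ε) * ε ^ 2 ≤ 1 :=
    (mul_le_mul h1 (pow_le_one₀ hε0.le hε1) (by positivity) zero_le_one).trans_eq (one_mul 1)
  nlinarith [mul_le_mul_of_nonneg_left h2 hε0.le, show ε ^ (2 * 2) = ε ^ 2 * ε ^ 2 by ring]

theorem three_halves_mul_log_two_div_le {ε : ℝ} (hε0 : 0 < ε) :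
    3 / 2 * log (2 / ε) ≤ 2 / ε ^ 2 := by
  have hlog := log_le_sub_one_of_pos (show 0 < 2 / ε by positivity)
  have h : 3 / 2 * (2 / ε - 1) ≤ 2 / ε ^ 2 := by
    rw [div_sub_one hε0.ne', mul_div_assoc', div_le_div_iff₀ hε0 (by positivity)]
    nlinarith [sq_nonneg (ε - 1), sq_nonneg ε]
  linarith

/-- The waiting time `(2 + √V)/ε²` beats the deviation `√(V (2/ε - 1))` of `log g` and the
entropy bound `log (2/ε)`. -/
theorem exp_half_mul_exp_neg_le {ε m V : ℝ} (hε0 : 0 < ε) (hε1 : ε < 1) (hV : 0 ≤ V)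
    (hm : m - √(V * (2 / ε - 1)) ≤ log (2 / ε)) :
    exp ((m + √(V * (2 / ε - 1))) / 2) * exp (-((2 + √V) / ε ^ 2)) ≤ ε / 2 := by
  have hdev : √(V * (2 / ε - 1)) ≤ √V / ε ^ 2 := by
    rw [sqrt_mul hV, div_eq_mul_one_div (√V)]
    exact mul_le_mul_of_nonneg_left (sqrt_two_div_sub_one_le hε0 hε1.le) (sqrt_nonneg V)
  have hlog := three_halves_mul_log_two_div_le hε0
  rw [← exp_add, ← exp_log (show 0 < ε / 2 by positivity), exp_le_exp,
    show ε / 2 = (2 / ε)⁻¹ by rw [inv_div], log_inv]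
  linarith [add_div 2 √V (ε ^ 2)]

/-- **Varentropy bound on the mixing window.** For the process started at `x`, if at
some time `t > 0` one has `TV(X_t) ≤ 1 − ε`, the density `f_t` exists and
`Ent(X_t)`, `Varent(X_t)` are finite, then
`t_mix(ε) ≤ t + 2/(λε²) + √(Varent(X_t))/(λε²)`. -/
theorem varentropy_mixing_window
    (F : Framework E) (x : E) (lam : ℝ) (hlam : 0 < lam) (hgap : HasSpectralGap F lam)
    (ε : ℝ) (hε : ε ∈ Set.Ioo (0 : ℝ) 1) (t : ℝ) (ht : 0 < t)
    (ft : E → ℝ) (hft : ∀ a, 0 ≤ ft a)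
    (hdens : (F.κ t) x = F.μ.withDensity fun a => ENNReal.ofReal (ft a))
    (hEnt : Integrable (fun a => ft a * Real.log (ft a)) F.μ)
    (hVarent : Integrable (fun a => ft a * (Real.log (ft a)) ^ 2) F.μ)
    (htv : tvDist ((F.κ t) x) F.μ ≤ 1 - ε) :
    tmix F x ε ≤
      ENNReal.ofReal (t + 2 / (lam * ε ^ 2) +
        Real.sqrt ((∫ a, ft a * (Real.log (ft a)) ^ 2 ∂F.μ)
          - (∫ a, ft a * Real.log (ft a) ∂F.μ) ^ 2) / (lam * ε ^ 2)) := by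
  have := F.isProb
  have := F.isMarkov t
  obtain ⟨hε0, hε1⟩ := hε
  obtain ⟨g, hg, hg0, hν⟩ := exists_measurable_density
    (hdens ▸ withDensity_absolutelyContinuous _ _ : F.κ t x ≪ F.μ)
  obtain ⟨hL, hmean, hvar⟩ := log_density_moments hg hg0 hν hft hdens hEnt hVarent
  set m := ∫ a, ft a * log (ft a) ∂F.μ
  set V := (∫ a, ft a * log (ft a) ^ 2 ∂F.μ) - m ^ 2
  have hV : 0 ≤ V := hvar ▸ variance_nonneg _ _
  -- `c = 2/ε - 1` makes each Cantelli tail of `log g` at most `ε / 2`.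
  have hc : 0 ≤ 2 / ε - 1 := by rw [sub_nonneg, le_div_iff₀ hε0]; linarith
  have hhalf : 1 / (1 + (2 / ε - 1)) = ε / 2 := by field_simp; ring
  have hlow := measureReal_lt_sub_sqrt_le hL hc
  have hup := measureReal_gt_add_sqrt_le hL hc
  rw [hmean, hvar, hhalf] at hlow hup
  have hm := le_log_two_div_of_tvDist_le hg hg0 hν hε0 htv hlow
  set h := 2 / (lam * ε ^ 2) + √V / (lam * ε ^ 2)
  have hlamh : -lam * h = -((2 + √V) / ε ^ 2) := by simp only [h]; field_simp
  refine (F.tmix_le (t := t + h) (by positivity) (tvDist_le_of_forall fun A hA => ?_)).trans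
    (ENNReal.ofReal_le_ofReal (by rw [add_assoc]))
  calc _ ≤ _ := F.abs_kernel_add_apply_sub_le hgap ht.le (by positivity) hg hg0 hν
        (m + √(V * (2 / ε - 1))) hA
    _ ≤ ε / 2 + ε / 2 := by
      refine add_le_add (hlamh ▸ exp_half_mul_exp_neg_le hε0 hε1 hV hm)
        ((measureReal_mono fun a ha => ?_).trans hup)
      exact (lt_log_iff_exp_lt ((exp_pos _).trans ha)).mpr ha
    _ = ε := add_halves ε
end
end

section
/- (Integrated form of the entropy differential inequality.) Let ε > 0, 0 < t₀ ≤ t, and let h : ℝ → ℝ be differentiable on [t₀, t] with h'(s) ≤ −(ε·h(s) − 1)²/(2s) for all s ∈ [t₀, t]. If ε·h(s) > 1 for all s ∈ [t₀, t], then 1/(ε·h(t) − 1) ≥ 1/(ε·h(t₀) − 1) + (ε/2)·log(t/t₀). -/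
/-- **Integrated form of the entropy differential inequality.** If `h` is
differentiable on `[t₀, t] ⊂ (0, ∞)` with `h'(s) ≤ −(ε·h(s) − 1)²/(2s)`, and
`ε·h(s) > 1` on `[t₀, t]`, then
`1/(ε·h(t) − 1) ≥ 1/(ε·h(t₀) − 1) + (ε/2)·log(t/t₀)`. -/
theorem integrated_entropy_differential_inequality
    (ε t₀ t : ℝ) (hε : 0 < ε) (ht₀ : 0 < t₀) (ht : t₀ ≤ t)
    (h h' : ℝ → ℝ)
    (hderiv : ∀ s ∈ Set.Icc t₀ t, HasDerivWithinAt h (h' s) (Set.Icc t₀ t) s)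
    (hineq : ∀ s ∈ Set.Icc t₀ t, h' s ≤ -(ε * h s - 1) ^ 2 / (2 * s))
    (hpos : ∀ s ∈ Set.Icc t₀ t, 1 < ε * h s) :
    1 / (ε * h t₀ - 1) + (ε / 2) * Real.log (t / t₀) ≤ 1 / (ε * h t - 1) := by
  set g : ℝ → ℝ := fun s => 1 / (ε * h s - 1) - ε / 2 * Real.log s with hg
  set g' : ℝ → ℝ := fun s => -(ε * h' s) / (ε * h s - 1) ^ 2 - ε / (2 * s) with hg'
  have hne : ∀ s ∈ Set.Icc t₀ t, ε * h s - 1 ≠ 0 := fun s hs =>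
    ne_of_gt (by linarith [hpos s hs])
  have hspos : ∀ s ∈ Set.Icc t₀ t, 0 < s := fun s hs => lt_of_lt_of_le ht₀ hs.1
  have hgderiv : ∀ s ∈ Set.Icc t₀ t, HasDerivWithinAt g (g' s) (Set.Icc t₀ t) s := by
    intro s hs
    have h1 : HasDerivWithinAt (fun x => ε * h x - 1) (ε * h' s) (Set.Icc t₀ t) s :=
      ((hderiv s hs).const_mul ε).sub_const 1
    have h2 := h1.inv (hne s hs)
    have h3 : HasDerivWithinAt (fun x => ε / 2 * Real.log x) (ε / 2 * s⁻¹) (Set.Icc t₀ t) s :=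
      ((Real.hasDerivAt_log (ne_of_gt (hspos s hs))).hasDerivWithinAt).const_mul _
    have : HasDerivWithinAt ((fun x => ε * h x - 1)⁻¹ - fun x => ε / 2 * Real.log x)
        (-(ε * h' s) / (ε * h s - 1) ^ 2 - ε / 2 * s⁻¹) (Set.Icc t₀ t) s := h2.sub h3
    convert this using 1
    · funext x; simp [hg, one_div]
    · have hs0 := ne_of_gt (hspos s hs)
      simp only [g']; ring
  have hg'nonneg : ∀ s ∈ Set.Icc t₀ t, 0 ≤ g' s := by
    intro s hs
    have hs0 := hspos s hs
    have hd : 0 < ε * h s - 1 := by linarith [hpos s hs]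
    have hsq : 0 < (ε * h s - 1) ^ 2 := by positivity
    have h5 : h' s * (2 * s) ≤ -(ε * h s - 1) ^ 2 := by
      have := (le_div_iff₀ (by positivity : (0:ℝ) < 2 * s)).mp (hineq s hs)
      linarith
    have h4 : -(ε * h' s) / (ε * h s - 1) ^ 2 ≥ ε / (2 * s) := by
      rw [ge_iff_le, div_le_div_iff₀ (by positivity) hsq]
      nlinarith [hε.le]
    simp only [hg']
    linarith
  have hmono : MonotoneOn g (Set.Icc t₀ t) := by
    apply monotoneOn_of_hasDerivWithinAt_nonneg (convex_Icc t₀ t)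
      (fun s hs => (hgderiv s hs).continuousWithinAt)
      (f' := g')
    · intro x hx
      rw [interior_Icc] at hx ⊢
      exact (hgderiv x (Set.Ioo_subset_Icc_self hx)).mono Set.Ioo_subset_Icc_self
    · intro x hx
      rw [interior_Icc] at hx
      exact hg'nonneg x (Set.Ioo_subset_Icc_self hx)
  have key : g t₀ ≤ g t := hmono (Set.left_mem_Icc.mpr ht) (Set.right_mem_Icc.mpr ht) ht
  have hlog : Real.log (t / t₀) = Real.log t - Real.log t₀ :=
    Real.log_div (ne_of_gt (lt_of_lt_of_le ht₀ ht)) (ne_of_gt ht₀)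
  simp only [hg] at key
  rw [hlog]
  linarith
end

section
/- (Entropy decay bound under non-negative curvature.) Let ε > 0 and t₀ > 0, and let h : ℝ → ℝ be differentiable on [t₀, ∞) with h'(s) ≤ −(ε·h(s) − 1)²/(2s) for all s ≥ t₀. Then for every t > t₀: h(t) ≤ 1/ε + 2/(ε²·log(t/t₀)). -/
/-!
Put `g = ε h - 1`; the hypothesis becomes the Riccati inequality `g' ≤ -(ε/2) g² / s`. In particular
`g` is nonincreasing, so if `g t > 0` then `g > 0` on `[t₀, t]`, and there
`(1/g - (ε/2) log s)' = -g'/g² - ε/(2s) ≥ 0`. Hence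
`1/g(t) ≥ 1/g(t₀) + (ε/2) log (t/t₀) > (ε/2) log (t/t₀)`, i.e. `g t < 2 / (ε log (t/t₀))`.
-/

open Set Real

theorem monotoneOn_inv_sub_of_hasDerivWithinAt {D : Set ℝ} (hD : Convex ℝ D) {g g' F F' : ℝ → ℝ}
    (hg : ∀ x ∈ D, HasDerivWithinAt g (g' x) D x) (hF : ∀ x ∈ D, HasDerivWithinAt F (F' x) D x)
    (hpos : ∀ x ∈ D, 0 < g x) (hle : ∀ x ∈ D, g' x ≤ -F' x * g x ^ 2) :
    MonotoneOn (fun x => (g x)⁻¹ - F x) D := by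
  have hderiv : ∀ x ∈ D,
      HasDerivWithinAt (fun x => (g x)⁻¹ - F x) (-g' x / g x ^ 2 - F' x) D x :=
    fun x hx => ((hg x hx).inv (hpos x hx).ne').sub (hF x hx)
  refine monotoneOn_of_hasDerivWithinAt_nonneg hD
    (fun x hx => (hderiv x hx).continuousWithinAt)
    (fun x hx => (hderiv x (interior_subset hx)).mono interior_subset) fun x hx => ?_
  have hx := interior_subset hx
  rw [sub_nonneg, le_div_iff₀ (pow_pos (hpos x hx) 2)]
  linarith [hle x hx]

theorem le_inv_mul_log_of_hasDerivWithinAt_le_neg_mul_sq_div {c t₀ : ℝ} (hc : 0 < c)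
    (ht₀ : 0 < t₀) {g g' : ℝ → ℝ} (hg : ∀ s ∈ Ici t₀, HasDerivWithinAt g (g' s) (Ici t₀) s)
    (hle : ∀ s ∈ Ici t₀, g' s ≤ -c * g s ^ 2 / s) {t : ℝ} (ht : t₀ < t) :
    g t ≤ (c * log (t / t₀))⁻¹ := by
  have hL : 0 < log (t / t₀) := log_pos ((one_lt_div ht₀).2 ht)
  rcases le_or_gt (g t) 0 with hgt | hgt
  · exact hgt.trans (by positivity)
  have hanti : AntitoneOn g (Ici t₀) :=
    antitoneOn_of_hasDerivWithinAt_nonpos (convex_Ici t₀)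
      (fun s hs => (hg s hs).continuousWithinAt)
      (fun s hs => (hg s (interior_subset hs)).mono interior_subset) fun s hs => by
        have hs₀ : 0 < s := ht₀.trans (by simpa using hs)
        exact (hle s (interior_subset hs)).trans
          (div_nonpos_of_nonpos_of_nonneg (by nlinarith [sq_nonneg (g s)]) hs₀.le)
  have hpos : ∀ s ∈ Icc t₀ t, 0 < g s := fun s hs =>
    hgt.trans_le (hanti hs.1 (hs.1.trans hs.2) hs.2)
  have hmono := monotoneOn_inv_sub_of_hasDerivWithinAt (convex_Icc t₀ t)
    (fun s hs => (hg s hs.1).mono Icc_subset_Ici_self)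
    (fun s hs => ((hasDerivAt_log (ht₀.trans_le hs.1).ne').hasDerivWithinAt.const_mul c))
    hpos fun s hs =>
      calc g' s ≤ -c * g s ^ 2 / s := hle s hs.1
        _ = -(c * s⁻¹) * g s ^ 2 := by field_simp
  have key := hmono (left_mem_Icc.2 ht.le) (right_mem_Icc.2 ht.le) ht.le
  refine ((lt_inv_comm₀ (by positivity) hgt).1 ?_).le
  calc c * log (t / t₀) = c * log t - c * log t₀ := by
        rw [log_div (ht₀.trans ht).ne' ht₀.ne']; ring
    _ < (g t₀)⁻¹ + (c * log t - c * log t₀) :=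
        lt_add_of_pos_left _ (inv_pos.2 (hpos t₀ (left_mem_Icc.2 ht.le)))
    _ ≤ (g t)⁻¹ := by linarith

/-- **Entropy decay bound under non-negative curvature.** If `h` is differentiable
on `[t₀, ∞)` (with `t₀ > 0`) and `h'(s) ≤ −(ε·h(s) − 1)²/(2s)` there, then for
every `t > t₀`, `h(t) ≤ 1/ε + 2/(ε²·log(t/t₀))`. -/
theorem entropy_decay_nonneg_curvature
    (ε t₀ : ℝ) (hε : 0 < ε) (ht₀ : 0 < t₀)
    (h h' : ℝ → ℝ)
    (hderiv : ∀ s ∈ Set.Ici t₀, HasDerivWithinAt h (h' s) (Set.Ici t₀) s)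
    (hineq : ∀ s ∈ Set.Ici t₀, h' s ≤ -(ε * h s - 1) ^ 2 / (2 * s)) :
    ∀ t : ℝ, t₀ < t → h t ≤ 1 / ε + 2 / (ε ^ 2 * Real.log (t / t₀)) := by
  intro t ht
  have hL : 0 < log (t / t₀) := log_pos ((one_lt_div ht₀).2 ht)
  have hbound := le_inv_mul_log_of_hasDerivWithinAt_le_neg_mul_sq_div (half_pos hε) ht₀
    (g := fun s => ε * h s - 1) (fun s hs => ((hderiv s hs).const_mul ε).sub_const 1)
    (fun s hs =>
      calc ε * h' s ≤ ε * (-(ε * h s - 1) ^ 2 / (2 * s)) := by gcongr; exact hineq s hs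
        _ = -(ε / 2) * (ε * h s - 1) ^ 2 / s := by field_simp) ht
  calc h t = (1 + (ε * h t - 1)) / ε := by field_simp; ring
    _ ≤ (1 + (ε / 2 * log (t / t₀))⁻¹) / ε := by gcongr
    _ = 1 / ε + 2 / (ε ^ 2 * log (t / t₀)) := by field_simp
end

section
/- (Entropy decay bound under positive curvature.) Let ε > 0, κ > 0 and t₀ ≥ 0, and let h : ℝ → ℝ be differentiable on [t₀, ∞) with h'(s) ≤ −κ·(ε·h(s) − 1)² for all s ≥ t₀. Then for every t > t₀: h(t) ≤ 1/ε + 1/(ε²·κ·(t − t₀)). -/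
/-!
Put `u = ε h - 1`. Then `u' ≤ -(ε κ) u²`, so `u` is non-increasing. If `u(t) > 0`, then `u > 0`
on `[t₀, t]` and the Riccati comparison `(1/u)' = -u'/u² ≥ ε κ` gives `1/u(t) > ε κ (t - t₀)`.
Hence `u(t) < 1/(ε κ (t - t₀))` in all cases, which is the claim after dividing by `ε`.
-/

open Set

section RiccatiComparison

variable {u u' : ℝ → ℝ} {a b c : ℝ}

theorem monotoneOn_inv_sub_mul_of_deriv_le_neg_sq
    (hu : ∀ s ∈ Icc a b, HasDerivWithinAt u (u' s) (Icc a b) s)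
    (hpos : ∀ s ∈ Icc a b, 0 < u s) (hineq : ∀ s ∈ Icc a b, u' s ≤ -c * u s ^ 2) :
    MonotoneOn (fun s => (u s)⁻¹ - c * s) (Icc a b) := by
  have hderiv : ∀ s ∈ Icc a b, HasDerivWithinAt (fun s => (u s)⁻¹ - c * s)
      (-u' s / u s ^ 2 - c) (Icc a b) s := fun s hs =>
    ((hu s hs).inv (hpos s hs).ne').sub (by simpa using (hasDerivWithinAt_id s _).const_mul c)
  refine monotoneOn_of_hasDerivWithinAt_nonneg (convex_Icc a b)
    (fun s hs => (hderiv s hs).continuousWithinAt)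
    (fun s hs => (hderiv s (interior_subset hs)).mono interior_subset) fun s hs => ?_
  have hs' := interior_subset hs
  have hsq : 0 < u s ^ 2 := pow_pos (hpos s hs') 2
  rw [sub_nonneg, le_div_iff₀ hsq]
  linarith [hineq s hs']

theorem lt_inv_mul_sub_of_deriv_le_neg_sq (hc : 0 < c) (hab : a < b)
    (hu : ∀ s ∈ Icc a b, HasDerivWithinAt u (u' s) (Icc a b) s)
    (hineq : ∀ s ∈ Icc a b, u' s ≤ -c * u s ^ 2) :
    u b < 1 / (c * (b - a)) := by
  have hbound : 0 < 1 / (c * (b - a)) := by have := sub_pos.2 hab; positivity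
  have hanti : AntitoneOn u (Icc a b) :=
    antitoneOn_of_hasDerivWithinAt_nonpos (convex_Icc a b)
      (fun s hs => (hu s hs).continuousWithinAt)
      (fun s hs => (hu s (interior_subset hs)).mono interior_subset)
      fun s hs => (hineq s (interior_subset hs)).trans
        (by nlinarith [sq_nonneg (u s)])
  rcases le_or_gt (u b) 0 with hub | hub
  · linarith
  have ha : a ∈ Icc a b := left_mem_Icc.2 hab.le
  have hb : b ∈ Icc a b := right_mem_Icc.2 hab.le
  have hpos : ∀ s ∈ Icc a b, 0 < u s := fun s hs => hub.trans_le (hanti hs hb hs.2)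
  have hmono := monotoneOn_inv_sub_mul_of_deriv_le_neg_sq hu hpos hineq ha hb hab.le
  have hinv : c * (b - a) < (u b)⁻¹ := by
    have := inv_pos.2 (hpos a ha)
    simp only at hmono
    linarith
  rwa [lt_inv_comm₀ (by positivity) hub, ← one_div] at hinv

end RiccatiComparison

theorem entropy_decay_positive_curvature_general
    (ε kap t₀ : ℝ) (hε : 0 < ε) (hkap : 0 < kap)
    (h h' : ℝ → ℝ)
    (hderiv : ∀ s ∈ Set.Ici t₀, HasDerivWithinAt h (h' s) (Set.Ici t₀) s)
    (hineq : ∀ s ∈ Set.Ici t₀, h' s ≤ -kap * (ε * h s - 1) ^ 2) :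
    ∀ t : ℝ, t₀ < t → h t ≤ 1 / ε + 1 / (ε ^ 2 * kap * (t - t₀)) := by
  intro t ht
  have hu : ∀ s ∈ Icc t₀ t, HasDerivWithinAt (fun s => ε * h s - 1) (ε * h' s) (Icc t₀ t) s :=
    fun s hs => (((hderiv s hs.1).const_mul ε).sub_const 1).mono Icc_subset_Ici_self
  have hu' : ∀ s ∈ Icc t₀ t, ε * h' s ≤ -(ε * kap) * (ε * h s - 1) ^ 2 := fun s hs => by
    have := mul_le_mul_of_nonneg_left (hineq s hs.1) hε.le
    linarith
  have key := lt_inv_mul_sub_of_deriv_le_neg_sq (mul_pos hε hkap) ht hu hu'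
  have hrhs : 1 / ε + 1 / (ε ^ 2 * kap * (t - t₀)) = (1 + 1 / (ε * kap * (t - t₀))) / ε := by
    have := (sub_pos.2 ht).ne'
    field_simp
  rw [hrhs, le_div_iff₀ hε, mul_comm]
  linarith

/-- **Entropy decay bound under positive curvature.** If `h` is differentiable on
`[t₀, ∞)` (with `t₀ ≥ 0`) and `h'(s) ≤ −κ·(ε·h(s) − 1)²` there, then for every
`t > t₀`, `h(t) ≤ 1/ε + 1/(ε²·κ·(t − t₀))`. -/
theorem entropy_decay_positive_curvature
    (ε kap t₀ : ℝ) (hε : 0 < ε) (hkap : 0 < kap) (ht₀ : 0 ≤ t₀)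
    (h h' : ℝ → ℝ)
    (hderiv : ∀ s ∈ Set.Ici t₀, HasDerivWithinAt h (h' s) (Set.Ici t₀) s)
    (hineq : ∀ s ∈ Set.Ici t₀, h' s ≤ -kap * (ε * h s - 1) ^ 2) :
    ∀ t : ℝ, t₀ < t → h t ≤ 1 / ε + 1 / (ε ^ 2 * kap * (t - t₀)) :=
  entropy_decay_positive_curvature_general ε kap t₀ hε hkap h h' hderiv hineq
end
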